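/- arXiv:1608.01869 — 6 statements merged into one kernel-verified Lean document; each statement's English description precedes it below -/
import Mathlib

section
/- Let x_1, ..., x_N be distinct points in ℝ^n with N > 1, ‖x_1‖ ≥ ‖x_j‖ for all j, and let μ* (ζ) = ∑_{j=1}^N e^{-i⟨x_j,ζ⟩} for ζ ∈ ℂ^n. Then for any t > 0 with t(‖x_1‖² - ⟨x_j,x_1⟩) > log N for all j ≥ 2, and any ξ ∈ ℝ^n, setting ζ = ξ + i t x_1, one has |μ*(ζ)| ≥ (1/N) e^{t‖x_1‖²}. -/
open scoped BigOperators RealInnerProductSpace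

theorem stmt_0 (n N : ℕ) (hN : 1 < N) (x : Fin N → EuclideanSpace ℝ (Fin n))
    (hx : Function.Injective x)
    (j0 : Fin N) (hj0 : (j0 : ℕ) = 0)
    (hmax : ∀ j, ‖x j‖ ≤ ‖x j0‖)
    (μstar : EuclideanSpace ℂ (Fin n) → ℂ)
    (hμ : ∀ ζ, μstar ζ = ∑ j, Complex.exp (-Complex.I * ∑ i, (x j i : ℂ) * ζ i))
    (t : ℝ) (ht : 0 < t)
    (htj : ∀ j, j ≠ j0 → Real.log N < t * (‖x j0‖ ^ 2 - ⟪x j, x j0⟫))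
    (ξ : EuclideanSpace ℝ (Fin n))
    (ζ : EuclideanSpace ℂ (Fin n))
    (hζ : ∀ i, ζ i = (ξ i : ℂ) + Complex.I * (t * x j0 i)) :
    (1 / N) * Real.exp (t * ‖x j0‖ ^ 2) ≤ ‖μstar ζ‖ := by
  have hNpos : (0:ℝ) < N := by positivity
  have hinner : ∀ j : Fin N, ⟪x j, x j0⟫ = ∑ i, x j i * x j0 i := by
    intro j
    simp [PiLp.inner_apply, RCLike.inner_apply]
    exact Finset.sum_congr rfl (fun i _ => mul_comm _ _)
  have habs : ∀ j : Fin N,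
      ‖Complex.exp (-Complex.I * ∑ i, (x j i : ℂ) * ζ i)‖
        = Real.exp (t * ⟪x j, x j0⟫) := by
    intro j
    rw [Complex.norm_exp]
    congr 1
    have hS : (∑ i, (x j i : ℂ) * ζ i)
        = ((∑ i, x j i * ξ i : ℝ) : ℂ) + Complex.I * ((t * ⟪x j, x j0⟫ : ℝ) : ℂ) := by
      rw [hinner]
      push_cast
      rw [Finset.mul_sum, Finset.mul_sum, ← Finset.sum_add_distrib]
      refine Finset.sum_congr rfl fun i _ => ?_
      rw [hζ i]
      ring
    rw [hS]
    simp
  rw [hμ, Finset.sum_eq_add_sum_sdiff_singleton_of_mem (Finset.mem_univ j0)]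
  have h1 : ‖Complex.exp (-Complex.I * ∑ i, (x j0 i : ℂ) * ζ i)‖
      = Real.exp (t * ‖x j0‖ ^ 2) := by
    rw [habs j0, real_inner_self_eq_norm_sq]
  have hterm : ∀ j ∈ Finset.univ \ {j0},
      ‖Complex.exp (-Complex.I * ∑ i, (x j i : ℂ) * ζ i)‖
        ≤ Real.exp (t * ‖x j0‖ ^ 2) / N := by
    intro j hj
    have hj' : j ≠ j0 := by simpa using (Finset.mem_sdiff.mp hj).2
    rw [habs j]
    have := htj j hj'
    have h2 : t * ⟪x j, x j0⟫ < t * ‖x j0‖ ^ 2 - Real.log N := by nlinarith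
    calc Real.exp (t * ⟪x j, x j0⟫) ≤ Real.exp (t * ‖x j0‖ ^ 2 - Real.log N) :=
          Real.exp_le_exp.mpr h2.le
      _ = Real.exp (t * ‖x j0‖ ^ 2) / N := by
          rw [Real.exp_sub, Real.exp_log hNpos]
  have hsum : ‖∑ j ∈ Finset.univ \ {j0},
      Complex.exp (-Complex.I * ∑ i, (x j i : ℂ) * ζ i)‖
        ≤ (N - 1) * (Real.exp (t * ‖x j0‖ ^ 2) / N) := by
    calc ‖∑ j ∈ Finset.univ \ {j0},
          Complex.exp (-Complex.I * ∑ i, (x j i : ℂ) * ζ i)‖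
        ≤ ∑ j ∈ Finset.univ \ {j0},
            ‖Complex.exp (-Complex.I * ∑ i, (x j i : ℂ) * ζ i)‖ := by
          exact norm_sum_le _ _
      _ ≤ ∑ _j ∈ Finset.univ \ {j0}, Real.exp (t * ‖x j0‖ ^ 2) / N :=
          Finset.sum_le_sum hterm
      _ = (N - 1) * (Real.exp (t * ‖x j0‖ ^ 2) / N) := by
          rw [Finset.sum_const]
          have : (Finset.univ \ {j0} : Finset (Fin N)).card = N - 1 := by
            simp [Finset.card_sdiff_of_subset]
          rw [this, nsmul_eq_mul]
          have : ((N - 1 : ℕ) : ℝ) = (N : ℝ) - 1 := by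
            have : 1 ≤ N := hN.le
            push_cast [this]; ring
          rw [this]
  have hge : ‖Complex.exp (-Complex.I * ∑ i, (x j0 i : ℂ) * ζ i)‖
      - ‖∑ j ∈ Finset.univ \ {j0},
          Complex.exp (-Complex.I * ∑ i, (x j i : ℂ) * ζ i)‖
      ≤ ‖Complex.exp (-Complex.I * ∑ i, (x j0 i : ℂ) * ζ i)
          + ∑ j ∈ Finset.univ \ {j0},
              Complex.exp (-Complex.I * ∑ i, (x j i : ℂ) * ζ i)‖ := by
    have h := norm_add_le
      (Complex.exp (-Complex.I * ∑ i, (x j0 i : ℂ) * ζ i)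
        + ∑ j ∈ Finset.univ \ {j0}, Complex.exp (-Complex.I * ∑ i, (x j i : ℂ) * ζ i))
      (-(∑ j ∈ Finset.univ \ {j0}, Complex.exp (-Complex.I * ∑ i, (x j i : ℂ) * ζ i)))
    simp only [add_neg_cancel_right, norm_neg] at h
    linarith
  rw [h1] at hge
  have heq : Real.exp (t * ‖x j0‖ ^ 2) - (N - 1) * (Real.exp (t * ‖x j0‖ ^ 2) / N)
      = (1 / N : ℝ) * Real.exp (t * ‖x j0‖ ^ 2) := by
    field_simp
    ring
  linarith
end

section
/- Fix distinct points x_1, ..., x_N in ℝ^n (N ≥ 1). The holomorphic function μ*(ζ) = ∑_{j=1}^N e^{-i⟨x_j,ζ⟩} on ℂ^n is slowly decreasing: there exists A > 0 such that for every ξ ∈ ℝ^n, sup{|μ*(ζ)| : ζ ∈ ℂ^n, ‖ζ-ξ‖ ≤ A log(2+‖ξ‖)} ≥ (A+‖ξ‖)^{-A}. -/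
open scoped BigOperators

noncomputable def realToComplex (n : ℕ) (ξ : EuclideanSpace ℝ (Fin n)) :
    EuclideanSpace ℂ (Fin n) := WithLp.toLp 2 (fun i => (ξ i : ℂ))

/-- A function on ℂⁿ is slowly decreasing. -/
def SlowlyDecreasing {n : ℕ} (u : EuclideanSpace ℂ (Fin n) → ℂ) : Prop :=
  ∃ A > (0:ℝ), ∀ ξ : EuclideanSpace ℝ (Fin n),
    (A + ‖ξ‖) ^ (-A) ≤
      sSup ((fun ζ => ‖u ζ‖) ''
        {ζ | ‖ζ - realToComplex n ξ‖ ≤ A * Real.log (2 + ‖ξ‖)})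

theorem stmt_2 (n N : ℕ) (hN : 1 ≤ N) (x : Fin N → EuclideanSpace ℝ (Fin n))
    (hx : Function.Injective x) :
    SlowlyDecreasing (fun ζ : EuclideanSpace ℂ (Fin n) =>
      ∑ j, Complex.exp (-Complex.I * ∑ i, (x j i : ℂ) * ζ i)) := by
  classical
  have hne : Nonempty (Fin N) := ⟨⟨0, hN⟩⟩
  obtain ⟨j0, hj0⟩ : ∃ j0 : Fin N, ∀ j, ‖x j‖ ≤ ‖x j0‖ := Finite.exists_max _
  set v : EuclideanSpace ℝ (Fin n) := x j0 with hv
  set b : Fin N → ℝ := fun j => ∑ i, x j i * v i with hb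
  have hinner : ∀ j, b j = (inner ℝ (x j) v : ℝ) := by
    intro j; simp [hb, PiLp.inner_apply, RCLike.inner_apply, mul_comm]
  have hbj0 : b j0 = ‖v‖ ^ 2 := by
    rw [hinner, real_inner_self_eq_norm_sq]
  have hblt : ∀ j, j ≠ j0 → b j < b j0 := by
    intro j hj
    have hxx : x j ≠ x j0 := fun h => hj (hx h)
    have h1 : (0:ℝ) < ‖x j - v‖ := by
      rw [norm_pos_iff]; intro h; exact hxx (by rwa [sub_eq_zero] at h)
    have h2 : ‖x j - v‖ ^ 2 = ‖x j‖ ^ 2 - 2 * (inner ℝ (x j) v : ℝ) + ‖v‖ ^ 2 :=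
      norm_sub_sq_real _ _
    have h3 : ‖x j‖ ≤ ‖v‖ := hj0 j
    rw [hinner j, hbj0]
    nlinarith [norm_nonneg (x j), norm_nonneg v, norm_nonneg (x j - v)]
  -- choose t
  set g : Fin N → ℝ := fun j => if 0 < b j0 - b j then Real.log (2*N) / (b j0 - b j) else 0 with hg
  set t : ℝ := 1 + ∑ j, |g j| with ht
  have ht1 : 1 ≤ t := by
    have : 0 ≤ ∑ j, |g j| := Finset.sum_nonneg fun j _ => abs_nonneg _
    linarith
  have ht0 : 0 < t := lt_of_lt_of_le one_pos ht1
  have htj : ∀ j, j ≠ j0 → Real.log (2*N) ≤ t * (b j0 - b j) := by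
    intro j hj
    have hd : 0 < b j0 - b j := sub_pos.2 (hblt j hj)
    have hgj : g j = Real.log (2*N) / (b j0 - b j) := by
      simp only [hg]; exact if_pos hd
    have h1 : g j ≤ t := by
      have := Finset.single_le_sum (f := fun j => |g j|) (fun j _ => abs_nonneg _)
        (Finset.mem_univ j)
      calc g j ≤ |g j| := le_abs_self _
        _ ≤ ∑ j, |g j| := this
        _ ≤ t := by rw [ht]; linarith
    calc Real.log (2*N) = (Real.log (2*N) / (b j0 - b j)) * (b j0 - b j) := by
          field_simp
      _ = g j * (b j0 - b j) := by rw [hgj]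
      _ ≤ t * (b j0 - b j) := by exact mul_le_mul_of_nonneg_right h1 hd.le
  -- the key abs computation
  have habs : ∀ (ξ : EuclideanSpace ℝ (Fin n)) (j : Fin N),
      ‖Complex.exp (-Complex.I * ∑ i, (x j i : ℂ) *
        ((ξ i : ℂ) + ((t * v i : ℝ) : ℂ) * Complex.I))‖ = Real.exp (t * b j) := by
    intro ξ j
    rw [Complex.norm_exp]
    congr 1
    have : (-Complex.I * ∑ i, (x j i : ℂ) * ((ξ i : ℂ) + ((t * v i : ℝ) : ℂ) * Complex.I)).re
        = (∑ i, (x j i : ℂ) * ((ξ i : ℂ) + ((t * v i : ℝ) : ℂ) * Complex.I)).im := by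
      simp
    rw [this, Complex.im_sum]
    rw [hb, Finset.mul_sum]
    congr 1; ext i
    simp; ring
  -- lower bound 1/2 at the special point
  have hlow : ∀ ξ : EuclideanSpace ℝ (Fin n),
      (1:ℝ)/2 ≤ ‖∑ j, Complex.exp (-Complex.I * ∑ i, (x j i : ℂ) *
        ((fun i => (ξ i : ℂ) + ((t * v i : ℝ) : ℂ) * Complex.I) i))‖ := by
    intro ξ
    set f : Fin N → ℂ := fun j => Complex.exp (-Complex.I * ∑ i, (x j i : ℂ) *
        ((ξ i : ℂ) + ((t * v i : ℝ) : ℂ) * Complex.I)) with hf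
    have habsf : ∀ j, ‖f j‖ = Real.exp (t * b j) := fun j => habs ξ j
    have hsplit : ∑ j, f j = f j0 + ∑ j ∈ Finset.univ.erase j0, f j := by
      rw [Finset.add_sum_erase _ _ (Finset.mem_univ j0)]
    have hrest : ‖∑ j ∈ Finset.univ.erase j0, f j‖ ≤ Real.exp (t * b j0) / 2 := by
      calc ‖∑ j ∈ Finset.univ.erase j0, f j‖
          ≤ ∑ j ∈ Finset.univ.erase j0, ‖f j‖ := by
            simpa using norm_sum_le (Finset.univ.erase j0) f
        _ ≤ ∑ j ∈ Finset.univ.erase j0, Real.exp (t * b j0) / (2*N) := by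
            apply Finset.sum_le_sum
            intro j hj
            have hjne : j ≠ j0 := Finset.ne_of_mem_erase hj
            rw [habsf j]
            have h1 : t * b j ≤ t * b j0 - Real.log (2*N) := by
              have := htj j hjne; nlinarith
            calc Real.exp (t * b j) ≤ Real.exp (t * b j0 - Real.log (2*N)) :=
                  Real.exp_le_exp.2 h1
              _ = Real.exp (t * b j0) / (2*N) := by
                  rw [Real.exp_sub, Real.exp_log (by positivity)]
        _ ≤ Real.exp (t * b j0) / 2 := by
            rw [Finset.sum_const, nsmul_eq_mul]
            have hcard : (Finset.univ.erase j0).card ≤ N := by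
              calc (Finset.univ.erase j0).card ≤ (Finset.univ : Finset (Fin N)).card :=
                    Finset.card_le_card (Finset.erase_subset _ _)
                _ = N := Finset.card_univ.trans (Fintype.card_fin N)
            have hE : (0:ℝ) ≤ Real.exp (t * b j0) / (2*N) := by positivity
            calc ((Finset.univ.erase j0).card : ℝ) * (Real.exp (t * b j0) / (2*N))
                ≤ (N : ℝ) * (Real.exp (t * b j0) / (2*N)) := by
                  apply mul_le_mul_of_nonneg_right _ hE
                  exact_mod_cast hcard
              _ ≤ Real.exp (t * b j0) / 2 := by
                  have hNpos : (0:ℝ) < N := by exact_mod_cast hN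
                  have heq : (N:ℝ) * (Real.exp (t * b j0) / (2*N)) =
                      Real.exp (t * b j0) / 2 := by field_simp
                  rw [heq]
      -- end calc
    have h1 : Real.exp (t * b j0) - Real.exp (t * b j0) / 2 ≤ ‖∑ j, f j‖ := by
      have h2 : ‖f j0‖ ≤ ‖∑ j, f j‖ +
          ‖∑ j ∈ Finset.univ.erase j0, f j‖ := by
        have : f j0 = (∑ j, f j) - ∑ j ∈ Finset.univ.erase j0, f j := by
          rw [hsplit]; ring
        rw [this]
        exact (norm_sub_le _ _)
      rw [habsf j0] at h2
      linarith
    have h3 : (1:ℝ) ≤ Real.exp (t * b j0) := by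
      rw [show (1:ℝ) = Real.exp 0 from (Real.exp_zero).symm]
      apply Real.exp_le_exp.2
      have : 0 ≤ b j0 := by rw [hbj0]; positivity
      positivity
    simp only [hf] at h1
    calc (1:ℝ)/2 = 1 - 1/2 := by norm_num
      _ ≤ Real.exp (t * b j0) - Real.exp (t * b j0) / 2 := by linarith
      _ ≤ _ := h1
  -- choose A
  set A : ℝ := max 2 (t * ‖v‖ / Real.log 2) with hA
  have hA2 : (2:ℝ) ≤ A := le_max_left _ _
  have hApos : 0 < A := by linarith
  refine ⟨A, hApos, fun ξ => ?_⟩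
  set r : ℝ := A * Real.log (2 + ‖ξ‖) with hr
  have hlog2 : Real.log 2 ≤ Real.log (2 + ‖ξ‖) :=
    Real.log_le_log (by norm_num) (by linarith [norm_nonneg ξ])
  have hlog2pos : (0:ℝ) < Real.log 2 := Real.log_pos (by norm_num)
  have hrpos : 0 < r := by
    apply mul_pos hApos (lt_of_lt_of_le hlog2pos hlog2)
  -- special point
  set ζ : EuclideanSpace ℂ (Fin n) := WithLp.toLp 2 (fun i => (ξ i : ℂ) + ((t * v i : ℝ) : ℂ) * Complex.I)
    with hζ
  have hζmem : ‖ζ - realToComplex n ξ‖ ≤ r := by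
    have hnorm : ‖ζ - realToComplex n ξ‖ = t * ‖v‖ := by
      rw [EuclideanSpace.norm_eq, EuclideanSpace.norm_eq]
      have : ∀ i, ‖(ζ - realToComplex n ξ) i‖ = t * |v i| := by
        intro i
        have : (ζ - realToComplex n ξ) i = ((t * v i : ℝ) : ℂ) * Complex.I := by
          simp [hζ, realToComplex]
        rw [this]
        simp [abs_mul, abs_of_pos ht0]
      calc Real.sqrt (∑ i, ‖(ζ - realToComplex n ξ) i‖^2)
          = Real.sqrt (∑ i, t^2 * |v i|^2) := by
            congr 1; apply Finset.sum_congr rfl; intro i _; rw [this i]; ring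
        _ = Real.sqrt (t^2 * ∑ i, ‖v i‖^2) := by
            congr 1; rw [Finset.mul_sum]; apply Finset.sum_congr rfl; intro i _
            simp [Real.norm_eq_abs]
        _ = t * Real.sqrt (∑ i, ‖v i‖^2) := by
            rw [Real.sqrt_mul (by positivity), Real.sqrt_sq ht0.le]
    rw [hnorm, hr]
    calc t * ‖v‖ = (t * ‖v‖ / Real.log 2) * Real.log 2 := by field_simp
      _ ≤ A * Real.log (2 + ‖ξ‖) := by
          apply mul_le_mul (le_max_right _ _) hlog2 hlog2pos.le hApos.le
  -- bddAbove
  have hbdd : BddAbove ((fun ζ => ‖∑ j, Complex.exp (-Complex.I *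
      ∑ i, (x j i : ℂ) * ζ i)‖) '' {ζ | ‖ζ - realToComplex n ξ‖ ≤ r}) := by
    refine ⟨∑ j : Fin N, Real.exp ((∑ i, |x j i|) * (‖realToComplex n ξ‖ + r)), ?_⟩
    rintro y ⟨w, hw, rfl⟩
    simp only [Set.mem_setOf_eq] at hw
    have hwnorm : ‖w‖ ≤ ‖realToComplex n ξ‖ + r := by
      calc ‖w‖ = ‖(w - realToComplex n ξ) + realToComplex n ξ‖ := by
            rw [sub_add_cancel]
        _ ≤ ‖w - realToComplex n ξ‖ + ‖realToComplex n ξ‖ := norm_add_le _ _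
        _ ≤ ‖realToComplex n ξ‖ + r := by linarith
    have hcoord : ∀ i, ‖w i‖ ≤ ‖w‖ := by
      intro i
      have h1 : ‖w i‖ = ‖w i‖ := rfl
      rw [h1]
      have h2 : ‖w i‖^2 ≤ ∑ k, ‖w k‖^2 :=
        Finset.single_le_sum (f := fun k => ‖w k‖^2) (fun k _ => sq_nonneg _)
          (Finset.mem_univ i)
      have h3 : ‖w‖ = Real.sqrt (∑ k, ‖w k‖^2) := EuclideanSpace.norm_eq w
      rw [h3]
      rw [show ‖w i‖ = Real.sqrt (‖w i‖^2) from (Real.sqrt_sq (norm_nonneg _)).symm]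
      exact Real.sqrt_le_sqrt h2
    calc ‖∑ j, Complex.exp (-Complex.I * ∑ i, (x j i : ℂ) * w i)‖
        ≤ ∑ j, ‖Complex.exp (-Complex.I * ∑ i, (x j i : ℂ) * w i)‖ := by
          exact norm_sum_le _ _
      _ ≤ ∑ j : Fin N, Real.exp ((∑ i, |x j i|) * (‖realToComplex n ξ‖ + r)) := by
          apply Finset.sum_le_sum
          intro j _
          rw [Complex.norm_exp]
          apply Real.exp_le_exp.2
          have hre : (-Complex.I * ∑ i, (x j i : ℂ) * w i).re =
              (∑ i, (x j i : ℂ) * w i).im := by simp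
          rw [hre]
          calc (∑ i, (x j i : ℂ) * w i).im ≤ ‖∑ i, (x j i : ℂ) * w i‖ :=
                le_trans (le_abs_self _) (Complex.abs_im_le_norm _)
            _ ≤ ∑ i, ‖(x j i : ℂ) * w i‖ := by
                exact norm_sum_le _ _
            _ ≤ ∑ i, |x j i| * (‖realToComplex n ξ‖ + r) := by
                apply Finset.sum_le_sum
                intro i _
                rw [norm_mul, Complex.norm_real, Real.norm_eq_abs]
                apply mul_le_mul_of_nonneg_left _ (abs_nonneg _)
                exact le_trans (hcoord i) hwnorm
            _ = (∑ i, |x j i|) * (‖realToComplex n ξ‖ + r) := by rw [Finset.sum_mul]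
  -- conclude
  have hmem : ‖∑ j, Complex.exp (-Complex.I * ∑ i, (x j i : ℂ) * ζ i)‖ ∈
      ((fun ζ => ‖∑ j, Complex.exp (-Complex.I * ∑ i, (x j i : ℂ) * ζ i)‖) ''
        {ζ | ‖ζ - realToComplex n ξ‖ ≤ r}) := ⟨ζ, hζmem, rfl⟩
  have hsup := le_csSup hbdd hmem
  have hrhs : (A + ‖ξ‖) ^ (-A) ≤ 1/2 := by
    have hbase : (2:ℝ) ≤ A + ‖ξ‖ := by linarith [norm_nonneg ξ]
    have h1 : (2:ℝ) ≤ (A + ‖ξ‖) ^ A := by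
      calc (2:ℝ) = 2 ^ (1:ℝ) := (Real.rpow_one 2).symm
        _ ≤ 2 ^ A := Real.rpow_le_rpow_left_iff (by norm_num) |>.2 (by linarith)
        _ ≤ (A + ‖ξ‖) ^ A := Real.rpow_le_rpow (by norm_num) hbase hApos.le
    rw [Real.rpow_neg (by linarith)]
    rw [inv_le_comm₀ (by linarith) (by norm_num)]
    linarith
  calc (A + ‖ξ‖) ^ (-A) ≤ 1/2 := hrhs
    _ ≤ ‖∑ j, Complex.exp (-Complex.I * ∑ i, (x j i : ℂ) * ζ i)‖ := hlow ξ
    _ ≤ _ := hsup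
end

section
/- Fix distinct points x_1, ..., x_N in ℝ^n and nonzero complex scalars c_1, ..., c_N. Then the holomorphic function ζ ↦ ∑_{j=1}^N c_j e^{-i⟨x_j,ζ⟩} on ℂ^n is slowly decreasing. -/
open scoped BigOperators

open MeasureTheory

lemma exists_sep (n N : ℕ) (x : Fin N → EuclideanSpace ℝ (Fin n))
    (hx : Function.Injective x) :
    ∃ v : EuclideanSpace ℝ (Fin n), ∀ j k : Fin N, j ≠ k →
      (∑ i, x j i * v i) ≠ (∑ i, x k i * v i) := by
  classical
  have hip : ∀ (u v : EuclideanSpace ℝ (Fin n)),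
      (inner ℝ u v) = ∑ i, u i * v i := by
    intro u v
    simp [PiLp.inner_apply, RCLike.inner_apply, mul_comm]
  have key : ∀ j k : Fin N, j ≠ k →
      (volume : Measure (EuclideanSpace ℝ (Fin n)))
        {v | ∑ i, x j i * v i = ∑ i, x k i * v i} = 0 := by
    intro j k hjk
    have hne : x j - x k ≠ 0 := sub_ne_zero.mpr (fun h => hjk (hx h))
    have hset : {v : EuclideanSpace ℝ (Fin n) | ∑ i, x j i * v i = ∑ i, x k i * v i}
        = (LinearMap.ker (innerSL ℝ (x j - x k)).toLinearMap :
            Set (EuclideanSpace ℝ (Fin n))) := by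
      ext v
      simp only [Set.mem_setOf_eq, SetLike.mem_coe, LinearMap.mem_ker,
        ContinuousLinearMap.coe_coe, innerSL_apply_apply, hip, PiLp.sub_apply, sub_mul,
        Finset.sum_sub_distrib, sub_eq_zero]
    rw [hset]
    apply Measure.addHaar_submodule
    intro h
    have hm := h ▸ Submodule.mem_top (R := ℝ) (x := x j - x k)
    rw [LinearMap.mem_ker] at hm
    simp only [ContinuousLinearMap.coe_coe, innerSL_apply_apply] at hm
    exact hne (inner_self_eq_zero.mp hm)
  by_contra hcon
  push_neg at hcon
  have hcover : (Set.univ : Set (EuclideanSpace ℝ (Fin n))) ⊆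
      ⋃ (p : Fin N × Fin N) (_ : p.1 ≠ p.2),
        {v : EuclideanSpace ℝ (Fin n) | ∑ i, x p.1 i * v i = ∑ i, x p.2 i * v i} := by
    intro v _
    obtain ⟨j, k, hjk, h⟩ := hcon v
    exact Set.mem_iUnion₂.mpr ⟨(j, k), hjk, h⟩
  have h0 : (volume : Measure (EuclideanSpace ℝ (Fin n))) Set.univ = 0 := by
    refine measure_mono_null hcover ?_
    exact measure_iUnion_null fun p => measure_iUnion_null fun hp => key p.1 p.2 hp
  exact (isOpen_univ.measure_ne_zero volume Set.univ_nonempty) h0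

lemma term_abs (n : ℕ) (xj : EuclideanSpace ℝ (Fin n)) (cj : ℂ)
    (w ξ : EuclideanSpace ℝ (Fin n)) :
    ‖cj * Complex.exp (-Complex.I *
      ∑ i, (xj i : ℂ) * ((ξ i : ℂ) + Complex.I * (w i : ℂ)))‖
    = ‖cj‖ * Real.exp (∑ i, xj i * w i) := by
  rw [norm_mul, Complex.norm_exp]
  congr 1
  rw [show ((-Complex.I * ∑ i, (xj i : ℂ) * ((ξ i : ℂ) + Complex.I * (w i : ℂ))).re
      = (∑ i, (xj i : ℂ) * ((ξ i : ℂ) + Complex.I * (w i : ℂ))).im) by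
    simp [Complex.mul_re]]
  rw [Complex.im_sum]
  congr 1
  exact Finset.sum_congr rfl fun i _ => by simp [Complex.mul_im]

theorem stmt_3 (n N : ℕ) (hN : 1 ≤ N) (x : Fin N → EuclideanSpace ℝ (Fin n))
    (hx : Function.Injective x) (c : Fin N → ℂ) (hc : ∀ j, c j ≠ 0) :
    SlowlyDecreasing (fun ζ : EuclideanSpace ℂ (Fin n) =>
      ∑ j, c j * Complex.exp (-Complex.I * ∑ i, (x j i : ℂ) * ζ i)) := by
  classical
  obtain ⟨v, hv⟩ := exists_sep n N x hx
  set b : Fin N → ℝ := fun j => ∑ i, x j i * v i with hbdef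
  have : Nonempty (Fin N) := ⟨⟨0, hN⟩⟩
  obtain ⟨j₀, -, hj₀⟩ := Finset.exists_max_image Finset.univ b Finset.univ_nonempty
  obtain ⟨δ, hδpos, hδ⟩ : ∃ δ > 0, ∀ j, j ≠ j₀ → b j ≤ b j₀ - δ := by
    rcases Finset.eq_empty_or_nonempty (Finset.univ.erase j₀) with he | hne
    · exact ⟨1, one_pos, fun j hj =>
        absurd (Finset.mem_erase.mpr ⟨hj, Finset.mem_univ j⟩) (by simp [he])⟩
    · refine ⟨(Finset.univ.erase j₀).inf' hne (fun j => b j₀ - b j), ?_, ?_⟩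
      · rw [gt_iff_lt, Finset.lt_inf'_iff]
        intro j hj
        have h1 : b j ≤ b j₀ := hj₀ j (Finset.mem_univ j)
        have h2 : b j ≠ b j₀ := hv j j₀ (Finset.mem_erase.mp hj).1
        have := lt_of_le_of_ne h1 h2
        linarith
      · intro j hj
        have := Finset.inf'_le (fun j => b j₀ - b j)
          (Finset.mem_erase.mpr ⟨hj, Finset.mem_univ j⟩)
        linarith
  set C : ℝ := ∑ j, ‖c j‖ with hCdef
  have hc₀ : 0 < ‖c j₀‖ := by
    simpa [norm_pos_iff] using hc j₀
  have hCge : ‖c j₀‖ ≤ C :=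
    Finset.single_le_sum (fun j _ => norm_nonneg _) (Finset.mem_univ j₀)
  have hCpos : 0 < C := lt_of_lt_of_le hc₀ hCge
  set s₀ : ℝ := Real.log (2 * C / ‖c j₀‖) / δ with hs₀def
  have hlogarg : 1 ≤ 2 * C / ‖c j₀‖ := by
    rw [le_div_iff₀ hc₀]
    linarith
  have hs₀ : 0 ≤ s₀ := div_nonneg (Real.log_nonneg hlogarg) hδpos.le
  set w : EuclideanSpace ℝ (Fin n) := s₀ • v with hwdef
  have hw : ∀ j : Fin N, ∑ i, x j i * w i = s₀ * b j := by
    intro j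
    rw [hbdef, Finset.mul_sum]
    refine Finset.sum_congr rfl fun i _ => ?_
    rw [hwdef]
    simp [PiLp.smul_apply, smul_eq_mul]
    ring
  set m : ℝ := ‖c j₀‖ / 2 * Real.exp (s₀ * b j₀) with hmdef
  have hm : 0 < m := by positivity
  -- the key pointwise lower bound at the shifted point
  have hkey : ∀ ξ : EuclideanSpace ℝ (Fin n),
      m ≤ ‖∑ j, c j * Complex.exp (-Complex.I *
        ∑ i, (x j i : ℂ) * ((ξ i : ℂ) + Complex.I * (w i : ℂ)))‖ := by
    intro ξ
    set f : Fin N → ℂ := fun j => c j * Complex.exp (-Complex.I *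
      ∑ i, (x j i : ℂ) * ((ξ i : ℂ) + Complex.I * (w i : ℂ))) with hfdef
    have habs : ∀ j, ‖f j‖ = ‖c j‖ * Real.exp (s₀ * b j) := by
      intro j
      rw [hfdef]
      simp only
      rw [term_abs, hw]
    have hsplit : f j₀ = (∑ j, f j) - ∑ j ∈ Finset.univ.erase j₀, f j := by
      rw [← Finset.add_sum_erase _ f (Finset.mem_univ j₀)]
      ring
    have h1 : ‖f j₀‖ ≤ ‖∑ j, f j‖
        + ∑ j ∈ Finset.univ.erase j₀, ‖f j‖ := by
      calc ‖f j₀‖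
          ≤ ‖∑ j, f j‖ + ‖∑ j ∈ Finset.univ.erase j₀, f j‖ := by
            rw [hsplit]
            simpa using
              norm_sub_le (∑ j, f j) (∑ j ∈ Finset.univ.erase j₀, f j)
        _ ≤ _ := by
            gcongr
            simpa using
              norm_sum_le (Finset.univ.erase j₀) f
    have hrest : ∑ j ∈ Finset.univ.erase j₀, ‖f j‖
        ≤ ‖c j₀‖ / 2 * Real.exp (s₀ * b j₀) := by
      have hstep : ∀ j ∈ Finset.univ.erase j₀,
          ‖f j‖ ≤ ‖c j‖ * Real.exp (s₀ * (b j₀ - δ)) := by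
        intro j hj
        rw [habs j]
        have := hδ j (Finset.mem_erase.mp hj).1
        exact mul_le_mul_of_nonneg_left (Real.exp_le_exp.mpr (by nlinarith))
          (norm_nonneg _)
      calc ∑ j ∈ Finset.univ.erase j₀, ‖f j‖
          ≤ ∑ j ∈ Finset.univ.erase j₀, ‖c j‖ * Real.exp (s₀ * (b j₀ - δ)) :=
            Finset.sum_le_sum hstep
        _ = (∑ j ∈ Finset.univ.erase j₀, ‖c j‖) * Real.exp (s₀ * (b j₀ - δ)) :=
            (Finset.sum_mul _ _ _).symm
        _ ≤ C * Real.exp (s₀ * (b j₀ - δ)) := by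
            gcongr
            exact Finset.sum_le_sum_of_subset_of_nonneg (Finset.erase_subset _ _)
              (fun j _ _ => norm_nonneg _)
        _ ≤ ‖c j₀‖ / 2 * Real.exp (s₀ * b j₀) := by
            have hsd : s₀ * δ = Real.log (2 * C / ‖c j₀‖) := by
              rw [hs₀def]
              field_simp
            have hexp : Real.exp (s₀ * (b j₀ - δ))
                = Real.exp (s₀ * b j₀) * (‖c j₀‖ / (2 * C)) := by
              rw [mul_sub, Real.exp_sub, hsd, Real.exp_log (by positivity)]
              field_simp
            rw [hexp]
            have h2C : 0 < 2 * C := by linarith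
            rw [show C * (Real.exp (s₀ * b j₀) * (‖c j₀‖ / (2 * C)))
                = ‖c j₀‖ / 2 * Real.exp (s₀ * b j₀) by field_simp]
    have hj0abs : ‖f j₀‖ = ‖c j₀‖ * Real.exp (s₀ * b j₀) := habs j₀
    rw [hmdef]
    linarith
  -- choose A
  set A : ℝ := max 3 (max (1/m) (‖w‖ / Real.log 2 + 1)) with hAdef
  have hA3 : (3:ℝ) ≤ A := le_max_left _ _
  have hApos : 0 < A := by linarith
  have hA1m : 1/m ≤ A := le_trans (le_max_left _ _) (le_max_right _ _)
  have hAw : ‖w‖ / Real.log 2 + 1 ≤ A := le_trans (le_max_right _ _) (le_max_right _ _)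
  have hlog2 : 0 < Real.log 2 := Real.log_pos one_lt_two
  have hwA : ‖w‖ ≤ A * Real.log 2 := by
    have h1 : ‖w‖ / Real.log 2 ≤ A := by linarith
    calc ‖w‖ = ‖w‖ / Real.log 2 * Real.log 2 := by field_simp
      _ ≤ A * Real.log 2 := by gcongr
  refine ⟨A, hApos, fun ξ => ?_⟩
  set ζ₀ : EuclideanSpace ℂ (Fin n) := WithLp.toLp 2 (fun i => (ξ i : ℂ) + Complex.I * (w i : ℂ)) with hζdef
  have hnormζ : ‖ζ₀ - realToComplex n ξ‖ = ‖w‖ := by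
    rw [EuclideanSpace.norm_eq, EuclideanSpace.norm_eq]
    congr 1
    refine Finset.sum_congr rfl fun i _ => ?_
    have : (ζ₀ - realToComplex n ξ) i = Complex.I * (w i : ℂ) := by
      simp [hζdef, realToComplex, PiLp.sub_apply]
    rw [this]
    simp
  have hlogmono : Real.log 2 ≤ Real.log (2 + ‖ξ‖) :=
    Real.log_le_log two_pos (by linarith [norm_nonneg ξ])
  have hζmem : ζ₀ ∈ {ζ : EuclideanSpace ℂ (Fin n) |
      ‖ζ - realToComplex n ξ‖ ≤ A * Real.log (2 + ‖ξ‖)} := by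
    rw [Set.mem_setOf_eq, hnormζ]
    calc ‖w‖ ≤ A * Real.log 2 := hwA
      _ ≤ A * Real.log (2 + ‖ξ‖) := by gcongr
  -- boundedness of the image
  have hcont : Continuous (fun ζ : EuclideanSpace ℂ (Fin n) =>
      ‖∑ j, c j * Complex.exp (-Complex.I * ∑ i, (x j i : ℂ) * ζ i)‖) := by
    apply continuous_norm.comp
    apply continuous_finset_sum
    intro j _
    apply continuous_const.mul
    apply Complex.continuous_exp.comp
    apply continuous_const.mul
    apply continuous_finset_sum
    intro i _
    exact continuous_const.mul (EuclideanSpace.proj i).continuous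
  have hsetball : {ζ : EuclideanSpace ℂ (Fin n) |
      ‖ζ - realToComplex n ξ‖ ≤ A * Real.log (2 + ‖ξ‖)}
      = Metric.closedBall (realToComplex n ξ) (A * Real.log (2 + ‖ξ‖)) := by
    ext ζ
    simp [Metric.mem_closedBall, dist_eq_norm]
  have hbdd : BddAbove ((fun ζ : EuclideanSpace ℂ (Fin n) =>
      ‖∑ j, c j * Complex.exp (-Complex.I * ∑ i, (x j i : ℂ) * ζ i)‖) ''
      {ζ | ‖ζ - realToComplex n ξ‖ ≤ A * Real.log (2 + ‖ξ‖)}) := by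
    rw [hsetball]
    exact ((isCompact_closedBall _ _).image hcont).bddAbove
  have hle : ‖∑ j, c j * Complex.exp (-Complex.I *
        ∑ i, (x j i : ℂ) * ζ₀ i)‖ ≤
      sSup ((fun ζ : EuclideanSpace ℂ (Fin n) =>
        ‖∑ j, c j * Complex.exp (-Complex.I * ∑ i, (x j i : ℂ) * ζ i)‖) ''
        {ζ | ‖ζ - realToComplex n ξ‖ ≤ A * Real.log (2 + ‖ξ‖)}) :=
    le_csSup hbdd ⟨ζ₀, hζmem, rfl⟩
  have hval : m ≤ ‖∑ j, c j * Complex.exp (-Complex.I *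
      ∑ i, (x j i : ℂ) * ζ₀ i)‖ := hkey ξ
  have hrpow : (A + ‖ξ‖) ^ (-A) ≤ m := by
    calc (A + ‖ξ‖) ^ (-A) ≤ A ^ (-A) :=
          Real.rpow_le_rpow_of_nonpos hApos
            (le_add_of_nonneg_right (norm_nonneg ξ)) (by linarith)
      _ ≤ A ^ (-1 : ℝ) :=
          Real.rpow_le_rpow_of_exponent_le (by linarith) (by linarith)
      _ = 1 / A := by rw [Real.rpow_neg_one, one_div]
      _ ≤ m := by
          rw [div_le_iff₀ hApos]
          have := (div_le_iff₀ hm).mp hA1m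
          linarith [mul_comm m A]
  exact le_trans hrpow (le_trans hval hle)
end

section
/- Every nonzero polynomial p on ℂ^n, viewed as a holomorphic function, is slowly decreasing: there is A > 0 such that sup{|p(ζ)| : ‖ζ-ξ‖ ≤ A log(2+‖ξ‖)} ≥ (A+‖ξ‖)^{-A} for all ξ ∈ ℝ^n. -/
open scoped BigOperators

section Aux

open Polynomial MvPolynomial Finset

lemma coeff_prod' {ι : Type*} (s : Finset ι) (f : ι → Polynomial ℂ) (e : ι → ℕ)
    (h : ∀ i ∈ s, (f i).natDegree ≤ e i) :
    (∏ i ∈ s, f i).coeff (∑ i ∈ s, e i) = ∏ i ∈ s, (f i).coeff (e i) := by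
  classical
  induction s using Finset.cons_induction with
  | empty => simp
  | cons a s ha ih =>
    rw [Finset.prod_cons, Finset.sum_cons, Finset.prod_cons,
      Polynomial.coeff_mul_add_eq_of_natDegree_le (h a (Finset.mem_cons_self a s))
        ((Polynomial.natDegree_prod_le _ _).trans
          (Finset.sum_le_sum (fun i hi => h i (Finset.mem_cons_of_mem hi)))),
      ih (fun i hi => h i (Finset.mem_cons_of_mem hi))]

lemma natDegree_linear_le (a b : ℂ) :
    (Polynomial.C a + Polynomial.C b * Polynomial.X).natDegree ≤ 1 := by
  apply (Polynomial.natDegree_add_le _ _).trans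
  simp only [max_le_iff, Polynomial.natDegree_C, Nat.zero_le, true_and]
  exact (Polynomial.natDegree_C_mul_le _ _).trans Polynomial.natDegree_X_le

lemma coeff_one_linear (a b : ℂ) :
    (Polynomial.C a + Polynomial.C b * Polynomial.X).coeff 1 = b := by
  simp

variable {n : ℕ}

lemma aeval_mon (ξ v : Fin n → ℂ) (m : Fin n →₀ ℕ) (c : ℂ) :
    (MvPolynomial.aeval (fun i => Polynomial.C (ξ i) + Polynomial.C (v i) * Polynomial.X)
      (MvPolynomial.monomial m c)) =
    Polynomial.C c * ∏ i ∈ m.support,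
      (Polynomial.C (ξ i) + Polynomial.C (v i) * Polynomial.X) ^ m i := by
  rw [MvPolynomial.aeval_monomial]
  rfl

lemma natDegree_pow_linear_le (ξ v : Fin n → ℂ) (m : Fin n →₀ ℕ) (i : Fin n) :
    ((Polynomial.C (ξ i) + Polynomial.C (v i) * Polynomial.X) ^ m i).natDegree ≤ m i :=
  calc ((Polynomial.C (ξ i) + Polynomial.C (v i) * Polynomial.X) ^ m i).natDegree
      ≤ m i * (Polynomial.C (ξ i) + Polynomial.C (v i) * Polynomial.X).natDegree :=
        Polynomial.natDegree_pow_le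
    _ ≤ m i * 1 := Nat.mul_le_mul_left _ (natDegree_linear_le (ξ i) (v i))
    _ = m i := Nat.mul_one _

lemma natDegree_aeval_mon_le (ξ v : Fin n → ℂ) (m : Fin n →₀ ℕ) (c : ℂ) :
    ((MvPolynomial.aeval (fun i => Polynomial.C (ξ i) + Polynomial.C (v i) * Polynomial.X)
      (MvPolynomial.monomial m c)).natDegree) ≤ m.degree := by
  rw [aeval_mon]
  apply (Polynomial.natDegree_C_mul_le _ _).trans
  apply (Polynomial.natDegree_prod_le _ _).trans
  rw [Finsupp.degree]
  exact Finset.sum_le_sum fun i _ => natDegree_pow_linear_le ξ v m i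

lemma coeff_prodlin (ξ v : Fin n → ℂ) (m : Fin n →₀ ℕ) :
    (∏ i ∈ m.support, (Polynomial.C (ξ i) + Polynomial.C (v i) * Polynomial.X) ^ m i).coeff
      m.degree = ∏ i ∈ m.support, v i ^ m i := by
  rw [Finsupp.degree_apply, coeff_prod' _ _ _ (fun i _ => natDegree_pow_linear_le ξ v m i)]
  apply Finset.prod_congr rfl
  intro i _
  have h1 := Polynomial.coeff_pow_of_natDegree_le (m := m i) (natDegree_linear_le (ξ i) (v i))
  simpa using h1

lemma degree_eq_sum (m : Fin n →₀ ℕ) : (m.sum fun _ e => e) = m.degree := rfl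

lemma coeff_aeval_line (ξ v : Fin n → ℂ) (p : MvPolynomial (Fin n) ℂ) :
    (MvPolynomial.aeval (fun i => Polynomial.C (ξ i) + Polynomial.C (v i) * Polynomial.X)
      p).coeff p.totalDegree
      = MvPolynomial.eval v (MvPolynomial.homogeneousComponent p.totalDegree p) := by
  classical
  set d := p.totalDegree with hd
  conv_lhs => rw [p.as_sum]
  rw [map_sum, Polynomial.finset_sum_coeff, MvPolynomial.homogeneousComponent_apply, map_sum]
  rw [Finset.sum_filter]
  apply Finset.sum_congr rfl
  intro m hm
  rw [aeval_mon, Polynomial.coeff_C_mul]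
  by_cases h : m.degree = d
  · rw [if_pos h, ← h, coeff_prodlin, MvPolynomial.eval_monomial]
    rfl
  · have hlt : m.degree < d :=
      lt_of_le_of_ne (by rw [← degree_eq_sum]; exact MvPolynomial.le_totalDegree hm) h
    rw [if_neg h, Polynomial.coeff_eq_zero_of_natDegree_lt (lt_of_le_of_lt ?_ hlt), mul_zero]
    apply (Polynomial.natDegree_prod_le _ _).trans
    rw [Finsupp.degree]
    exact Finset.sum_le_sum fun i _ => natDegree_pow_linear_le ξ v m i

lemma natDegree_aeval_line_le (ξ v : Fin n → ℂ) (p : MvPolynomial (Fin n) ℂ) :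
    (MvPolynomial.aeval (fun i => Polynomial.C (ξ i) + Polynomial.C (v i) * Polynomial.X)
      p).natDegree ≤ p.totalDegree := by
  conv_lhs => rw [p.as_sum]
  rw [map_sum]
  apply Polynomial.natDegree_sum_le_of_forall_le
  intro m hm
  exact (natDegree_aeval_mon_le ξ v m _).trans
    (by rw [← degree_eq_sum]; exact MvPolynomial.le_totalDegree hm)

lemma eval_aeval_line (ξ v : Fin n → ℂ) (p : MvPolynomial (Fin n) ℂ) (t : ℂ) :
    (MvPolynomial.aeval (fun i => Polynomial.C (ξ i) + Polynomial.C (v i) * Polynomial.X)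
      p).eval t = MvPolynomial.eval (fun i => ξ i + v i * t) p := by
  have h1 : (Polynomial.aeval t : Polynomial ℂ →ₐ[ℂ] ℂ)
      ((MvPolynomial.aeval
        (fun i => Polynomial.C (ξ i) + Polynomial.C (v i) * Polynomial.X)) p)
      = MvPolynomial.aeval (fun i => (Polynomial.aeval t : Polynomial ℂ →ₐ[ℂ] ℂ)
          (Polynomial.C (ξ i) + Polynomial.C (v i) * Polynomial.X)) p :=
    MvPolynomial.comp_aeval_apply _ _ _
  have h2 : ∀ P : Polynomial ℂ, (Polynomial.aeval t : Polynomial ℂ →ₐ[ℂ] ℂ) P = P.eval t := by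
    intro P; rw [Polynomial.aeval_def, Algebra.algebraMap_self]; rfl
  have h3 : ∀ (f : Fin n → ℂ) (q : MvPolynomial (Fin n) ℂ),
      (MvPolynomial.aeval f : MvPolynomial (Fin n) ℂ →ₐ[ℂ] ℂ) q = MvPolynomial.eval f q := by
    intro f q; rw [MvPolynomial.aeval_def, Algebra.algebraMap_self]; rfl
  have harg : (fun i => (Polynomial.aeval t : Polynomial ℂ →ₐ[ℂ] ℂ)
      (Polynomial.C (ξ i) + Polynomial.C (v i) * Polynomial.X)) = fun i => ξ i + v i * t := by
    funext i; simp [h2]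
  rw [← h2, h1, harg, h3]

lemma natDegree_basisDivisor_le (x y : ℂ) : (Lagrange.basisDivisor x y).natDegree ≤ 1 := by
  rcases eq_or_ne x y with rfl | h
  · rw [Lagrange.natDegree_basisDivisor_self]; omega
  · rw [Lagrange.natDegree_basisDivisor_of_ne h]

lemma coeff_one_basisDivisor (x y : ℂ) : (Lagrange.basisDivisor x y).coeff 1 = (x - y)⁻¹ := by
  rw [Lagrange.basisDivisor]
  simp [Polynomial.coeff_C_mul, Polynomial.coeff_sub]

lemma norm_coeff_basis_le (d i : ℕ) (hi : i ∈ Finset.range (d+1)) :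
    ‖(Lagrange.basis (Finset.range (d+1)) (Nat.cast : ℕ → ℂ) i).coeff d‖ ≤ 1 := by
  classical
  rw [Lagrange.basis]
  have hcard : ∑ _j ∈ (Finset.range (d+1)).erase i, 1 = d := by
    rw [Finset.sum_const, smul_eq_mul, mul_one, Finset.card_erase_of_mem hi,
      Finset.card_range]; omega
  have key := coeff_prod' ((Finset.range (d+1)).erase i)
    (fun j => Lagrange.basisDivisor (i:ℂ) (j:ℂ)) (fun _ => 1)
    (fun j _ => natDegree_basisDivisor_le _ _)
  rw [hcard] at key
  rw [key, norm_prod]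
  apply Finset.prod_le_one (fun j _ => norm_nonneg _)
  intro j hj
  rw [coeff_one_basisDivisor]
  rw [norm_inv]
  apply inv_le_one_of_one_le₀
  have hji : j ≠ i := Finset.ne_of_mem_erase hj
  have h1 : ((i:ℂ) - (j:ℂ)) = (((i:ℝ) - (j:ℝ) : ℝ) : ℂ) := by push_cast; ring
  rw [h1, Complex.norm_real]
  have h2 : ((i:ℤ) - (j:ℤ)) ≠ 0 := sub_ne_zero.mpr (by exact_mod_cast hji.symm)
  have h3 := Int.one_le_abs h2
  calc (1:ℝ) = ((1:ℤ):ℝ) := by norm_num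
    _ ≤ ((|(i:ℤ) - (j:ℤ)| : ℤ) : ℝ) := by exact_mod_cast h3
    _ = |(i:ℝ) - (j:ℝ)| := by rw [Int.cast_abs]; push_cast; ring_nf

lemma norm_coeff_le_sum_eval (P : Polynomial ℂ) (d : ℕ) (hdeg : P.degree < ((d+1 : ℕ) : ℕ)) :
    ‖P.coeff d‖ ≤ ∑ i ∈ Finset.range (d+1), ‖P.eval (i:ℂ)‖ := by
  classical
  have hvs : Set.InjOn (Nat.cast : ℕ → ℂ) (Finset.range (d+1)) :=
    fun a _ b _ h => Nat.cast_injective h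
  have h2 : P.degree < (#(Finset.range (d+1)) : ℕ) := by
    rwa [Finset.card_range]
  have hP := Lagrange.eq_interpolate hvs h2
  calc ‖P.coeff d‖
      = ‖(Lagrange.interpolate (Finset.range (d+1)) (Nat.cast : ℕ → ℂ)
          (fun i => P.eval (i:ℂ))).coeff d‖ := by rw [← hP]
    _ = ‖∑ i ∈ Finset.range (d+1),
          P.eval (i:ℂ) * (Lagrange.basis (Finset.range (d+1)) (Nat.cast : ℕ → ℂ) i).coeff d‖ := by
        rw [Lagrange.interpolate_apply, Polynomial.finset_sum_coeff]
        simp only [Polynomial.coeff_C_mul]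
    _ ≤ ∑ i ∈ Finset.range (d+1),
          ‖P.eval (i:ℂ) * (Lagrange.basis (Finset.range (d+1)) (Nat.cast : ℕ → ℂ) i).coeff d‖ :=
        norm_sum_le _ _
    _ ≤ ∑ i ∈ Finset.range (d+1), ‖P.eval (i:ℂ)‖ := by
        apply Finset.sum_le_sum
        intro i hi
        rw [norm_mul]
        calc ‖P.eval (i:ℂ)‖ * ‖(Lagrange.basis (Finset.range (d+1)) (Nat.cast : ℕ → ℂ) i).coeff d‖
            ≤ ‖P.eval (i:ℂ)‖ * 1 :=
              mul_le_mul_of_nonneg_left (norm_coeff_basis_le d i hi) (norm_nonneg _)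
          _ = ‖P.eval (i:ℂ)‖ := mul_one _

end Aux

theorem stmt_4 (n : ℕ) (p : MvPolynomial (Fin n) ℂ) (hp : p ≠ 0) :
    SlowlyDecreasing (fun ζ : EuclideanSpace ℂ (Fin n) =>
      MvPolynomial.eval (fun i => ζ i) p) := by
  classical
  set d := p.totalDegree with hd
  set q := MvPolynomial.homogeneousComponent d p with hqdef
  -- the top homogeneous component is nonzero
  obtain ⟨m, hm, hmd⟩ : ∃ m ∈ p.support, (m.sum fun _ e => e) = d := by
    have hne : p.support.Nonempty := MvPolynomial.support_nonempty.mpr hp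
    obtain ⟨m, hm, h⟩ := Finset.exists_mem_eq_sup p.support hne
      (fun m : Fin n →₀ ℕ => m.sum fun _ e => e)
    exact ⟨m, hm, h.symm⟩
  have hq : q ≠ 0 := by
    intro h0
    have h1 : MvPolynomial.coeff m q = MvPolynomial.coeff m p := by
      rw [hqdef, MvPolynomial.coeff_homogeneousComponent,
        if_pos (by rw [← degree_eq_sum]; exact hmd)]
    rw [h0] at h1
    exact (MvPolynomial.mem_support_iff.mp hm) (by simpa using h1.symm)
  -- a direction where the leading form does not vanish
  obtain ⟨v, hv⟩ : ∃ v : Fin n → ℂ, MvPolynomial.eval v q ≠ 0 := by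
    by_contra h
    push_neg at h
    exact hq (MvPolynomial.funext (q := 0) (fun x => by rw [h x]; simp))
  set c := ‖MvPolynomial.eval v q‖ with hcdef
  have hc : 0 < c := norm_pos_iff.mpr hv
  set w : EuclideanSpace ℂ (Fin n) := WithLp.toLp 2 (fun j => v j) with hwdef
  have hlog2 : 0 < Real.log 2 := Real.log_pos (by norm_num)
  set A : ℝ := 1 + (d:ℝ) * ‖w‖ / Real.log 2 + ((d:ℝ)+1)/c with hAdef
  have h₁ : 0 ≤ (d:ℝ) * ‖w‖ / Real.log 2 := by positivity
  have h₂ : 0 ≤ ((d:ℝ)+1)/c := by positivity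
  have hA1 : 1 ≤ A := by rw [hAdef]; linarith
  have hA0 : 0 < A := by linarith
  refine ⟨A, hA0, ?_⟩
  intro ξ
  set ξc := realToComplex n ξ with hξc
  set r := A * Real.log (2 + ‖ξ‖) with hr
  have hlog : Real.log 2 ≤ Real.log (2 + ‖ξ‖) :=
    Real.log_le_log (by norm_num) (by linarith [norm_nonneg ξ])
  have hrpos : 0 < r := by
    apply mul_pos hA0; linarith
  have hdr : (d:ℝ) * ‖w‖ ≤ r := by
    have h3 : (d:ℝ) * ‖w‖ ≤ A * Real.log 2 := by
      rw [← div_le_iff₀ hlog2] at *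
      linarith
    calc (d:ℝ) * ‖w‖ ≤ A * Real.log 2 := h3
      _ ≤ r := by rw [hr]; exact mul_le_mul_of_nonneg_left hlog hA0.le
  set P := MvPolynomial.aeval
    (fun i => Polynomial.C (ξc i) + Polynomial.C (v i) * Polynomial.X) p with hP
  set Sset := ((fun ζ : EuclideanSpace ℂ (Fin n) =>
      ‖MvPolynomial.eval (fun i => ζ i) p‖) ''
      {ζ | ‖ζ - ξc‖ ≤ r}) with hSset
  -- boundedness
  have hball : {ζ : EuclideanSpace ℂ (Fin n) | ‖ζ - ξc‖ ≤ r} = Metric.closedBall ξc r := by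
    ext ζ; simp [Metric.mem_closedBall, dist_eq_norm]
  have hcont : Continuous fun ζ : EuclideanSpace ℂ (Fin n) =>
      ‖MvPolynomial.eval (fun i => ζ i) p‖ :=
    continuous_norm.comp
      ((MvPolynomial.continuous_eval p).comp (PiLp.continuous_ofLp _ _))
  have hBdd : BddAbove Sset := by
    rw [hSset, hball]
    exact ((isCompact_closedBall ξc r).image hcont).bddAbove
  -- degree bound
  have hdeg : P.degree < ((d+1 : ℕ) : ℕ) := by
    apply lt_of_le_of_lt P.degree_le_natDegree
    exact_mod_cast Nat.lt_succ_of_le (natDegree_aeval_line_le _ _ p)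
  -- each sample point is in the ball
  have hmem : ∀ i ∈ Finset.range (d+1), ‖P.eval (i:ℂ)‖ ∈ Sset := by
    intro i hi
    have hi' : (i:ℝ) ≤ (d:ℝ) := by
      exact_mod_cast Nat.lt_succ_iff.mp (Finset.mem_range.mp hi)
    let ζi : EuclideanSpace ℂ (Fin n) := WithLp.toLp 2 (fun j => ξc j + v j * (i:ℂ))
    refine ⟨ζi, ?_, ?_⟩
    · show ‖ζi - ξc‖ ≤ r
      have hsub : ζi - ξc = (i:ℂ) • w := by
        ext j
        show ξc j + v j * (i:ℂ) - ξc j = (i:ℂ) * w j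
        rw [hwdef, PiLp.toLp_apply]; ring
      rw [hsub, norm_smul, Complex.norm_natCast]
      calc (i:ℝ) * ‖w‖ ≤ (d:ℝ) * ‖w‖ :=
          mul_le_mul_of_nonneg_right hi' (norm_nonneg w)
        _ ≤ r := hdr
    · show ‖MvPolynomial.eval _ p‖ = ‖P.eval (i:ℂ)‖
      rw [hP, eval_aeval_line]
  set M := sSup Sset with hM
  have hle : ∀ i ∈ Finset.range (d+1), ‖P.eval (i:ℂ)‖ ≤ M :=
    fun i hi => le_csSup hBdd (hmem i hi)
  have hMnn : 0 ≤ M := le_trans (norm_nonneg _) (hle 0 (Finset.mem_range.mpr (Nat.succ_pos d)))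
  -- the coefficient identity and the interpolation bound
  have hcoeff : ‖P.coeff d‖ = c := by
    rw [hP, hd, coeff_aeval_line, hcdef]
  have hkey : c ≤ ((d:ℝ)+1) * M := by
    calc c = ‖P.coeff d‖ := hcoeff.symm
      _ ≤ ∑ i ∈ Finset.range (d+1), ‖P.eval (i:ℂ)‖ := norm_coeff_le_sum_eval P d hdeg
      _ ≤ ∑ _i ∈ Finset.range (d+1), M := Finset.sum_le_sum hle
      _ = ((d:ℝ)+1) * M := by
          rw [Finset.sum_const, Finset.card_range, nsmul_eq_mul]
          push_cast; ring
  have hMge : c / ((d:ℝ)+1) ≤ M := by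
    rw [div_le_iff₀ (by positivity)]
    linarith
  -- putting everything together
  have hfinal : (A + ‖ξ‖) ^ (-A) ≤ c / ((d:ℝ)+1) := by
    have e1 : (A + ‖ξ‖) ^ (-A) ≤ A ^ (-A) :=
      Real.rpow_le_rpow_of_nonpos hA0 (le_add_of_nonneg_right (norm_nonneg ξ)) (by linarith)
    have e2 : A ≤ A ^ A := by
      calc A = A ^ (1:ℝ) := (Real.rpow_one A).symm
        _ ≤ A ^ A := Real.rpow_le_rpow_of_exponent_le hA1 hA1
    have e3 : A ^ (-A) ≤ A⁻¹ := by
      rw [Real.rpow_neg hA0.le]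
      exact inv_anti₀ hA0 e2
    have hAc : ((d:ℝ)+1)/c ≤ A := by rw [hAdef]; linarith
    have e4 : A⁻¹ ≤ c / ((d:ℝ)+1) := by
      rw [le_div_iff₀ (by positivity : (0:ℝ) < (d:ℝ)+1)]
      rw [div_le_iff₀ hc] at hAc
      rw [inv_mul_le_iff₀ hA0]
      linarith
    linarith
  exact le_trans hfinal hMge
end

section
/- For each t > 0 and each nonnegative integer m there exist rational functions P_m and Q_m (with real coefficients, having no poles on ℝ) such that for all real λ (away from the finitely many common removable points), ∫_{-t}^{t} cos(λs)(cosh t - cosh s)^m ds = P_m(λ) sin(λt)/λ + Q_m(λ) cos(λt). -/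
open Polynomial intervalIntegral

/-- the "good" shape of the answer -/
def GoodFn (t : ℝ) (F : ℝ → ℝ) : Prop :=
  ∃ p₁ p₂ q₁ q₂ : Polynomial ℝ,
    (∀ x : ℝ, p₂.eval x ≠ 0) ∧ (∀ x : ℝ, q₂.eval x ≠ 0) ∧
    ∀ lam : ℝ, lam ≠ 0 →
      F lam = (p₁.eval lam / p₂.eval lam) * Real.sin (lam * t) / lam
        + (q₁.eval lam / q₂.eval lam) * Real.cos (lam * t)

lemma GoodFn.zero (t : ℝ) : GoodFn t 0 := by
  refine ⟨0, 1, 0, 1, by simp, by simp, fun lam _ => by simp⟩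

lemma GoodFn.add {t : ℝ} {F G : ℝ → ℝ} (hF : GoodFn t F) (hG : GoodFn t G) :
    GoodFn t (F + G) := by
  obtain ⟨p₁, p₂, q₁, q₂, hp₂, hq₂, hF⟩ := hF
  obtain ⟨r₁, r₂, s₁, s₂, hr₂, hs₂, hG⟩ := hG
  refine ⟨p₁ * r₂ + r₁ * p₂, p₂ * r₂, q₁ * s₂ + s₁ * q₂, q₂ * s₂,
    fun x => by simp [hp₂ x, hr₂ x], fun x => by simp [hq₂ x, hs₂ x], fun lam hlam => ?_⟩
  have h1 := hF lam hlam
  have h2 := hG lam hlam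
  simp only [Pi.add_apply, h1, h2, eval_add, eval_mul]
  field_simp [hp₂ lam, hr₂ lam, hq₂ lam, hs₂ lam]
  ring

lemma GoodFn.smul {t : ℝ} {F : ℝ → ℝ} (c : ℝ) (hF : GoodFn t F) :
    GoodFn t (c • F) := by
  obtain ⟨p₁, p₂, q₁, q₂, hp₂, hq₂, hF⟩ := hF
  refine ⟨C c * p₁, p₂, C c * q₁, q₂, hp₂, hq₂, fun lam hlam => ?_⟩
  simp only [Pi.smul_apply, smul_eq_mul, hF lam hlam, eval_mul, eval_C]
  ring

/-- the explicit antiderivative computation -/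
lemma cosh_integral (t : ℝ) (j : ℕ) (lam : ℝ) (hlam : lam ≠ 0) :
    (∫ s in (-t)..t, Real.cos (lam * s) * Real.cosh (j * s)) =
      (2 * lam * Real.sin (lam * t) * Real.cosh (j * t)
        + 2 * j * Real.cos (lam * t) * Real.sinh (j * t)) / (lam ^ 2 + j ^ 2) := by
  have hd : (lam : ℝ) ^ 2 + (j : ℝ) ^ 2 ≠ 0 := by positivity
  have key : ∀ x : ℝ, HasDerivAt
      (fun s : ℝ => (lam * Real.sin (lam * s) * Real.cosh (j * s)
        + j * Real.cos (lam * s) * Real.sinh (j * s)) / (lam ^ 2 + j ^ 2))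
      (Real.cos (lam * x) * Real.cosh (j * x)) x := by
    intro x
    have hs : HasDerivAt (fun y : ℝ => lam * y) lam x := by
      simpa using (hasDerivAt_id x).const_mul lam
    have hj : HasDerivAt (fun y : ℝ => (j : ℝ) * y) (j : ℝ) x := by
      simpa using (hasDerivAt_id x).const_mul (j : ℝ)
    have h1 := ((hs.sin.const_mul lam).mul hj.cosh).add ((hs.cos.const_mul (j : ℝ)).mul hj.sinh)
    have h2 := h1.div_const (lam ^ 2 + (j : ℝ) ^ 2)
    refine h2.congr_deriv ?_
    rw [div_eq_iff hd]
    ring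
  rw [intervalIntegral.integral_eq_sub_of_hasDerivAt (fun x _ => key x) ((by fun_prop : Continuous fun s => Real.cos (lam*s) * Real.cosh (j*s)).intervalIntegrable _ _)]
  rw [mul_neg, mul_neg, Real.sin_neg, Real.cos_neg, Real.cosh_neg, Real.sinh_neg]
  field_simp
  ring

lemma good_cosh (t : ℝ) (j : ℕ) :
    GoodFn t (fun lam => ∫ s in (-t)..t, Real.cos (lam * s) * Real.cosh (j * s)) := by
  rcases eq_or_ne j 0 with rfl | hj
  · refine ⟨C 2, 1, 0, 1, by simp, by simp, fun lam hlam => ?_⟩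
    beta_reduce
    rw [cosh_integral t 0 lam hlam]
    simp only [Nat.cast_zero, zero_mul, Real.cosh_zero, Real.sinh_zero, eval_C, eval_one,
      eval_zero, mul_one, mul_zero, zero_mul, add_zero, zero_div, zero_add, pow_two]
    field_simp
  · have hj' : ((j : ℝ)) ≠ 0 := Nat.cast_ne_zero.mpr hj
    refine ⟨C (2 * Real.cosh (j * t)) * X ^ 2, X ^ 2 + C ((j : ℝ) ^ 2),
      C (2 * j * Real.sinh (j * t)), X ^ 2 + C ((j : ℝ) ^ 2),
      fun x => by simp only [eval_add, eval_pow, eval_X, eval_C]; positivity,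
      fun x => by simp only [eval_add, eval_pow, eval_X, eval_C]; positivity,
      fun lam hlam => ?_⟩
    beta_reduce
    rw [cosh_integral t j lam hlam]
    simp only [eval_mul, eval_add, eval_C, eval_pow, eval_X]
    have hd : lam ^ 2 + (j : ℝ) ^ 2 ≠ 0 := by positivity
    field_simp

/-- span of the cosh(j s) -/
noncomputable def coshSpan : Submodule ℝ (ℝ → ℝ) :=
  Submodule.span ℝ (Set.range (fun j : ℕ => fun s : ℝ => Real.cosh (j * s)))

lemma cosh_mul_mem {f : ℝ → ℝ} (hf : f ∈ coshSpan) :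
    (fun s => Real.cosh s * f s) ∈ coshSpan := by
  induction hf using Submodule.span_induction with
  | mem g hg =>
    obtain ⟨j, rfl⟩ := hg
    rcases eq_or_ne j 0 with rfl | hj
    · have : (fun s : ℝ => Real.cosh s * Real.cosh (↑(0:ℕ) * s)) =
        (fun s : ℝ => Real.cosh (↑(1:ℕ) * s)) := by
        funext s; simp
      rw [this]
      exact Submodule.subset_span ⟨1, rfl⟩
    · have hj1 : (1:ℝ) ≤ (j:ℝ) := by exact_mod_cast Nat.one_le_iff_ne_zero.mpr hj
      have : (fun s : ℝ => Real.cosh s * Real.cosh (j * s)) =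
          (1/2 : ℝ) • (fun s : ℝ => Real.cosh (↑(j+1) * s))
          + (1/2 : ℝ) • (fun s : ℝ => Real.cosh (↑(j-1) * s)) := by
        funext s
        have hc : ((j - 1 : ℕ) : ℝ) = (j : ℝ) - 1 := by
          rw [Nat.cast_sub (Nat.one_le_iff_ne_zero.mpr hj)]; simp
        simp only [Pi.add_apply, Pi.smul_apply, smul_eq_mul, Nat.cast_add, Nat.cast_one, hc]
        have e1 : ((j:ℝ) + 1) * s = j * s + s := by ring
        have e2 : ((j:ℝ) - 1) * s = j * s - s := by ring
        rw [e1, e2, Real.cosh_add, Real.cosh_sub]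
        ring
      rw [this]
      exact Submodule.add_mem _
        (Submodule.smul_mem _ _ (Submodule.subset_span ⟨j+1, rfl⟩))
        (Submodule.smul_mem _ _ (Submodule.subset_span ⟨j-1, rfl⟩))
  | zero =>
    have : (fun s => Real.cosh s * (0 : ℝ → ℝ) s) = (0 : ℝ → ℝ) := by funext s; simp
    rw [this]; exact Submodule.zero_mem _
  | add g h _ _ hg hh =>
    have : (fun s => Real.cosh s * (g + h) s) =
        (fun s => Real.cosh s * g s) + (fun s => Real.cosh s * h s) := by
      funext s; simp; ring
    rw [this]; exact Submodule.add_mem _ hg hh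
  | smul c g _ hg =>
    have : (fun s => Real.cosh s * (c • g) s) = c • (fun s => Real.cosh s * g s) := by
      funext s; simp; ring
    rw [this]; exact Submodule.smul_mem _ _ hg

lemma coshPow_mem (t : ℝ) (m : ℕ) :
    (fun s : ℝ => (Real.cosh t - Real.cosh s) ^ m) ∈ coshSpan := by
  induction m with
  | zero =>
    have : (fun s : ℝ => (Real.cosh t - Real.cosh s) ^ 0) =
        (fun s : ℝ => Real.cosh (↑(0:ℕ) * s)) := by funext s; simp
    rw [this]; exact Submodule.subset_span ⟨0, rfl⟩
  | succ n ih =>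
    have : (fun s : ℝ => (Real.cosh t - Real.cosh s) ^ (n+1)) =
        Real.cosh t • (fun s : ℝ => (Real.cosh t - Real.cosh s) ^ n)
        - (fun s : ℝ => Real.cosh s * (Real.cosh t - Real.cosh s) ^ n) := by
      funext s; simp; ring
    rw [this]
    exact Submodule.sub_mem _ (Submodule.smul_mem _ _ ih) (cosh_mul_mem ih)

lemma good_of_mem (t : ℝ) {f : ℝ → ℝ} (hf : f ∈ coshSpan) :
    Continuous f ∧ GoodFn t (fun lam => ∫ s in (-t)..t, Real.cos (lam * s) * f s) := by
  induction hf using Submodule.span_induction with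
  | mem g hg =>
    obtain ⟨j, rfl⟩ := hg
    exact ⟨by fun_prop, good_cosh t j⟩
  | zero => exact ⟨continuous_const, by simp only [Pi.zero_apply, mul_zero, intervalIntegral.integral_zero]; exact GoodFn.zero t⟩
  | add g h _ _ hg hh =>
    obtain ⟨hgc, hgG⟩ := hg
    obtain ⟨hhc, hhG⟩ := hh
    refine ⟨hgc.add hhc, ?_⟩
    have : (fun lam => ∫ s in (-t)..t, Real.cos (lam * s) * (g + h) s) =
        (fun lam => ∫ s in (-t)..t, Real.cos (lam * s) * g s)
        + (fun lam => ∫ s in (-t)..t, Real.cos (lam * s) * h s) := by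
      funext lam
      simp only [Pi.add_apply]
      rw [← intervalIntegral.integral_add ((by fun_prop : Continuous fun s => Real.cos (lam*s) * g s).intervalIntegrable _ _) ((by fun_prop : Continuous fun s => Real.cos (lam*s) * h s).intervalIntegrable _ _)]
      congr 1; funext s; simp [Pi.add_apply, mul_add]
    rw [this]
    exact hgG.add hhG
  | smul c g _ hg =>
    obtain ⟨hgc, hgG⟩ := hg
    refine ⟨hgc.const_smul c, ?_⟩
    have : (fun lam => ∫ s in (-t)..t, Real.cos (lam * s) * (c • g) s) =
        c • (fun lam => ∫ s in (-t)..t, Real.cos (lam * s) * g s) := by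
      funext lam
      simp only [Pi.smul_apply, smul_eq_mul, ← intervalIntegral.integral_const_mul]
      congr 1; funext s; ring
    rw [this]
    exact hgG.smul c

set_option linter.unusedVariables false in
theorem stmt_8 (t : ℝ) (ht : 0 < t) (m : ℕ) :
    ∃ p₁ p₂ q₁ q₂ : Polynomial ℝ,
      (∀ x : ℝ, p₂.eval x ≠ 0) ∧ (∀ x : ℝ, q₂.eval x ≠ 0) ∧
      ∀ lam : ℝ, lam ≠ 0 →
        (∫ s in (-t)..t, Real.cos (lam * s) * (Real.cosh t - Real.cosh s) ^ m) =
          (p₁.eval lam / p₂.eval lam) * Real.sin (lam * t) / lam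
            + (q₁.eval lam / q₂.eval lam) * Real.cos (lam * t) := by
  obtain ⟨-, p₁, p₂, q₁, q₂, hp₂, hq₂, hG⟩ := good_of_mem t (coshPow_mem t m)
  exact ⟨p₁, p₂, q₁, q₂, hp₂, hq₂, fun lam hlam => hG lam hlam⟩
end

section
/- Let E and F be Fréchet spaces. A continuous linear map Φ : E → F is surjective if and only if its adjoint Φ* : F' → E' is injective and has weak*-closed range in E'. -/
open Filter Topology Set Pointwise

namespace Stmt18Aux

section Bounded
variable {G : Type*} [AddCommGroup G] [Module ℝ G] [TopologicalSpace G]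
  [IsTopologicalAddGroup G] [ContinuousSMul ℝ G]

theorem continuous_of_bounded (g : G →ₗ[ℝ] ℝ) {U : Set G} (hU : U ∈ 𝓝 (0 : G)) {c : ℝ}
    (h : ∀ x ∈ U, |g x| ≤ c) : Continuous g := by
  have hc0 : (0 : ℝ) ≤ c := le_trans (abs_nonneg (g 0)) (h 0 (mem_of_mem_nhds hU))
  have h0 : ContinuousAt g 0 := by
    rw [ContinuousAt, map_zero, Metric.tendsto_nhds]
    intro ε hε
    have hne : (ε / (c + 1)) ≠ 0 := by positivity
    filter_upwards [(set_smul_mem_nhds_zero_iff hne).2 hU] with x hx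
    obtain ⟨y, hy, rfl⟩ := hx
    rw [map_smul]
    simp only [smul_eq_mul, dist_zero_right, Real.norm_eq_abs, abs_mul]
    calc |ε / (c + 1)| * |g y| ≤ (ε / (c + 1)) * c := by
          apply mul_le_mul (le_of_eq (abs_of_pos (by positivity))) (h y hy) (abs_nonneg _)
            (by positivity)
      _ < ε := by
          rw [div_mul_eq_mul_div, div_lt_iff₀ (by positivity)]
          nlinarith
  exact continuous_of_continuousAt_zero g.toAddMonoidHom h0

/-- scaled polar of a set. -/
def pol (c : ℝ) (U : Set G) : Set (WeakDual ℝ G) := {T | ∀ x ∈ U, |T x| ≤ c}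

omit [IsTopologicalAddGroup G] [ContinuousSMul ℝ G] in
theorem isClosed_pol (c : ℝ) (U : Set G) : IsClosed (pol c U) := by
  have : pol c U = ⋂ x ∈ U, {T : WeakDual ℝ G | |T x| ≤ c} := by
    ext T; simp [pol]
  rw [this]
  exact isClosed_biInter fun x _ =>
    isClosed_le ((WeakDual.eval_continuous x).abs) continuous_const

theorem isCompact_pol {U : Set G} (hU : U ∈ 𝓝 (0 : G)) (c : ℝ) : IsCompact (pol c U) := by
  have hemb : IsEmbedding (fun (T : WeakDual ℝ G) (y : G) => T y) :=
    WeakBilin.isEmbedding (B := topDualPairing ℝ G) ContinuousLinearMap.coe_injective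
  rw [hemb.isCompact_iff]
  set Q : Set (G → ℝ) := {f | (∀ x ∈ U, |f x| ≤ c) ∧ (∀ x y, f (x + y) = f x + f y) ∧
      (∀ (r : ℝ) (x : G), f (r • x) = r * f x)} with hQ
  have himage : (fun (T : WeakDual ℝ G) (y : G) => T y) '' pol c U = Q := by
    ext f
    constructor
    · rintro ⟨T, hT, rfl⟩
      refine ⟨hT, fun x y => map_add T x y, fun r x => ?_⟩
      show T (r • x) = r * T x
      rw [map_smul]; rfl
    · rintro ⟨h1, h2, h3⟩
      let g : G →ₗ[ℝ] ℝ :=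
        { toFun := f, map_add' := h2, map_smul' := fun r x => by simpa using h3 r x }
      have h1' : ∀ x ∈ U, |g x| ≤ c := h1
      exact ⟨(⟨g, continuous_of_bounded g hU h1'⟩ : G →L[ℝ] ℝ), h1', rfl⟩
  rw [himage]
  have habs : Absorbent ℝ U := absorbent_nhds_zero hU
  have hbound : ∀ x : G, ∃ b : ℝ, ∀ f ∈ Q, |f x| ≤ b := by
    intro x
    obtain ⟨r, hr⟩ := absorbs_iff_norm.1 (habs x)
    set a : ℝ := max r 1 with ha
    have hapos : (0 : ℝ) < a := lt_of_lt_of_le one_pos (le_max_right r 1)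
    have hx : x ∈ a • U := singleton_subset_iff.mp
      (hr a (by rw [Real.norm_eq_abs, abs_of_pos hapos]; exact le_max_left _ _))
    obtain ⟨y, hy, rfl⟩ := hx
    refine ⟨|a| * |c|, fun f hf => ?_⟩
    rw [hf.2.2 a y, abs_mul]
    exact mul_le_mul_of_nonneg_left (le_trans (hf.1 y hy) (le_abs_self c)) (abs_nonneg _)
  choose b hb using hbound
  have hclosed : IsClosed Q := by
    have : Q = (⋂ x ∈ U, {f : G → ℝ | |f x| ≤ c}) ∩
        ((⋂ x, ⋂ y, {f : G → ℝ | f (x + y) = f x + f y}) ∩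
         (⋂ (r : ℝ), ⋂ (x : G), {f : G → ℝ | f (r • x) = r * f x})) := by
      ext f; simp only [hQ, mem_setOf_eq, mem_inter_iff, mem_iInter]
    rw [this]
    refine IsClosed.inter (isClosed_biInter fun x _ =>
        isClosed_le (continuous_apply x).abs continuous_const) (IsClosed.inter ?_ ?_)
    · exact isClosed_iInter fun x => isClosed_iInter fun y =>
        isClosed_eq (continuous_apply (x + y)) ((continuous_apply x).add (continuous_apply y))
    · exact isClosed_iInter fun r => isClosed_iInter fun x =>
        isClosed_eq (continuous_apply (r • x)) (continuous_const.mul (continuous_apply x))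
  refine IsCompact.of_isClosed_subset (isCompact_univ_pi fun x => isCompact_Icc
    (a := -(b x)) (b := b x)) hclosed ?_
  intro f hf
  rw [Set.mem_pi]
  intro x _
  rw [mem_Icc]
  have := hb x f hf
  constructor
  · linarith [neg_abs_le (f x)]
  · linarith [le_abs_self (f x)]

end Bounded

end Stmt18Aux

namespace Stmt18Aux2

section OpenMapping
variable {G H : Type*}
  [AddCommGroup G] [Module ℝ G] [UniformSpace G] [IsUniformAddGroup G]
  [(uniformity G).IsCountablyGenerated] [CompleteSpace G]
  [AddCommGroup H] [Module ℝ H] [UniformSpace H] [IsUniformAddGroup H]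
  [(uniformity H).IsCountablyGenerated] [T0Space H]

theorem image_mem_nhds (f : G →L[ℝ] H)
    (hyp : ∀ W ∈ 𝓝 (0 : G), closure (f '' W) ∈ 𝓝 (0 : H)) :
    ∀ W ∈ 𝓝 (0 : G), f '' W ∈ 𝓝 (0 : H) := by
  classical
  haveI : FirstCountableTopology G := UniformSpace.firstCountableTopology G
  haveI : FirstCountableTopology H := UniformSpace.firstCountableTopology H
  intro W hW
  obtain ⟨b, hb⟩ := (𝓝 (0 : G)).exists_antitone_basis
  obtain ⟨w, hw⟩ := (𝓝 (0 : H)).exists_antitone_basis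
  obtain ⟨W₀, hW₀, hW₀closed, hW₀sub⟩ := exists_mem_nhds_isClosed_subset hW
  -- construct the chain u
  have hstep : ∀ V : Set G, V ∈ 𝓝 (0 : G) → ∀ n : ℕ, ∃ V' : Set G, V' ∈ 𝓝 (0 : G) ∧
      V' ⊆ b n ∧ (∀ x ∈ V', -x ∈ V') ∧ ∀ x ∈ V', ∀ y ∈ V', x + y ∈ V := by
    intro V hV n
    obtain ⟨V1, hV1, hV1half⟩ := exists_nhds_zero_half hV
    refine ⟨(V1 ∩ b n) ∩ -(V1 ∩ b n), ?_, ?_, ?_, ?_⟩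
    · exact inter_mem (inter_mem hV1 (hb.1.mem_of_mem trivial))
        (neg_mem_nhds_zero _ (inter_mem hV1 (hb.1.mem_of_mem trivial)))
    · exact fun x hx => hx.1.2
    · rintro x ⟨hx1, hx2⟩
      exact ⟨by simpa using hx2, by simpa using hx1⟩
    · intro x hx y hy
      exact hV1half x hx.1.1 y hy.1.1
  choose g hg1 hg2 hg3 hg4 using hstep
  let v : ℕ → {s : Set G // s ∈ 𝓝 (0 : G)} := fun n =>
    Nat.rec ⟨W₀, hW₀⟩ (fun n p => ⟨g p.1 p.2 (n + 1), hg1 _ _ _⟩) n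
  set u : ℕ → Set G := fun n => (v n).1 with hu
  have humem : ∀ n, u n ∈ 𝓝 (0 : G) := fun n => (v n).2
  have hu0 : u 0 = W₀ := rfl
  have husub : ∀ n, u (n + 1) ⊆ b (n + 1) := fun n => hg2 (u n) (v n).2 (n + 1)
  have husym : ∀ n, ∀ x ∈ u (n + 1), -x ∈ u (n + 1) := fun n => hg3 (u n) (v n).2 (n + 1)
  have huadd : ∀ n, ∀ x ∈ u (n + 1), ∀ y ∈ u (n + 1), x + y ∈ u n :=
    fun n => hg4 (u n) (v n).2 (n + 1)
  have humono : ∀ n, u (n + 1) ⊆ u n := fun n x hx => by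
    simpa using huadd n x hx 0 (mem_of_mem_nhds (humem (n + 1)))
  have huanti : Antitone u := antitone_nat_of_succ_le humono
  -- sums of elements of the chain
  have key : ∀ (n m : ℕ) (x : ℕ → G), (∀ k < n, x k ∈ u (m + k + 1)) →
      ∑ k ∈ Finset.range n, x k ∈ u m := by
    intro n
    induction n with
    | zero => intro m x _; simpa using mem_of_mem_nhds (humem m)
    | succ n ih =>
      intro m x hx
      rw [Finset.sum_range_succ']
      have h1 : x 0 ∈ u (m + 1) := by simpa using hx 0 (Nat.succ_pos n)
      have h2 : ∑ k ∈ Finset.range n, x (k + 1) ∈ u (m + 1) := by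
        refine ih (m + 1) (fun k => x (k + 1)) (fun k hk => ?_)
        have hidx : m + k + 1 + 1 = m + 1 + k + 1 := by omega
        have := hx (k + 1) (by omega)
        rwa [show m + (k + 1) + 1 = m + 1 + k + 1 by omega] at this
      exact huadd m _ h2 _ h1
  -- main inclusion
  have hincl : closure (f '' u 1) ⊆ f '' W := by
    intro y hy
    -- one-step construction
    have hstep2 : ∀ (z : H) (n : ℕ), z ∈ closure (f '' u (n + 1)) →
        ∃ (a : G) (z' : H), a ∈ u (n + 1) ∧ z' ∈ closure (f '' u (n + 2)) ∧
          z' ∈ w (n + 1) ∧ z' = z - f a := by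
      intro z n hz
      have hN : closure (f '' u (n + 2)) ∩ w (n + 1) ∈ 𝓝 (0 : H) :=
        inter_mem (hyp (u (n + 2)) (humem (n + 2))) (hw.1.mem_of_mem trivial)
      have hO : (fun t => z - t) ⁻¹' (closure (f '' u (n + 2)) ∩ w (n + 1)) ∈ 𝓝 z := by
        have hc : Continuous fun t : H => z - t := continuous_const.sub continuous_id
        refine hc.continuousAt.preimage_mem_nhds ?_
        rw [show z - z = (0 : H) from sub_self z]
        exact hN
      obtain ⟨p, hp1, hp2⟩ := (mem_closure_iff_nhds.mp hz) _ hO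
      obtain ⟨a, ha, hpa⟩ := hp2
      refine ⟨a, z - f a, ha, ?_, ?_, rfl⟩
      · rw [hpa]; exact hp1.1
      · rw [hpa]; exact hp1.2
    choose A Z hA hZc hZw hZe using hstep2
    -- the sequence of errors
    let e : ℕ → H := fun n =>
      Nat.rec y (fun n z => if h : z ∈ closure (f '' u (n + 1)) then Z z n h else 0) n
    have he0 : e 0 = y := rfl
    have hes : ∀ n, e (n + 1) =
        if h : e n ∈ closure (f '' u (n + 1)) then Z (e n) n h else 0 := fun n => rfl
    have hemem : ∀ n, e n ∈ closure (f '' u (n + 1)) := by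
      intro n
      induction n with
      | zero => exact hy
      | succ n ih =>
        rw [hes, dif_pos ih]
        exact hZc _ _ ih
    set x : ℕ → G := fun n => A (e n) n (hemem n) with hx
    have hx1 : ∀ n, x n ∈ u (n + 1) := fun n => hA _ _ _
    have hee : ∀ n, e (n + 1) = e n - f (x n) := fun n => by
      rw [hes, dif_pos (hemem n)]; exact hZe _ _ _
    have hew : ∀ n, e (n + 1) ∈ w (n + 1) := fun n => by
      rw [hes, dif_pos (hemem n)]; exact hZw _ _ _
    -- partial sums
    set s : ℕ → G := fun n => ∑ k ∈ Finset.range n, x k with hs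
    have hsmem : ∀ n, s n ∈ u 0 := fun n => key n 0 x (fun k _ => by
      have := hx1 k; rwa [show k + 1 = 0 + k + 1 by omega] at this)
    have hdiff : ∀ m n : ℕ, m ≤ n → s n - s m ∈ u m ∧ s m - s n ∈ u m := by
      intro m n hmn
      have h1 : s n - s m = ∑ k ∈ Finset.range (n - m), x (m + k) := by
        rw [hs]
        rw [← Finset.sum_Ico_eq_sub _ hmn, Finset.sum_Ico_eq_sum_range]
      constructor
      · rw [h1]
        exact key (n - m) m (fun k => x (m + k)) (fun k _ => hx1 (m + k))
      · have h2 : s m - s n = ∑ k ∈ Finset.range (n - m), -(x (m + k)) := by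
          rw [← neg_sub (s n) (s m), h1, ← Finset.sum_neg_distrib]
        rw [h2]
        exact key (n - m) m (fun k => -(x (m + k))) (fun k _ =>
          husym _ _ (hx1 (m + k)))
    have hcauchy : CauchySeq s := by
      apply cauchySeq_of_controlled (fun n => {p : G × G | p.2 - p.1 ∈ u n})
      · intro t ht
        rw [uniformity_eq_comap_nhds_zero G] at ht
        obtain ⟨V, hV, hVsub⟩ := ht
        obtain ⟨n, -, hn⟩ := hb.1.mem_iff.mp hV
        refine ⟨n + 1, fun p hp => hVsub ?_⟩
        exact hn (hb.2 (Nat.le_succ n) (husub n hp))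
      · intro N m n hm hn
        show s n - s m ∈ u N
        rcases le_total m n with h | h
        · exact huanti hm ((hdiff m n h).1)
        · exact huanti hn ((hdiff n m h).2)
    obtain ⟨xl, hxl⟩ := cauchySeq_tendsto_of_complete hcauchy
    have hxlW : xl ∈ W := by
      refine hW₀sub (hW₀closed.mem_of_tendsto hxl (Eventually.of_forall fun n => ?_))
      rw [← hu0]; exact hsmem n
    have hfs : ∀ n, f (s n) = y - e n := by
      intro n
      induction n with
      | zero => rw [show s 0 = 0 from Finset.sum_range_zero x, map_zero, he0, sub_self]
      | succ n ih =>
        have hsn : s (n + 1) = s n + x n := Finset.sum_range_succ x n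
        rw [hsn, map_add, ih, hee n]
        abel
    have het : Tendsto (fun n => e (n + 1)) atTop (𝓝 (0 : H)) :=
      hw.tendsto (fun n => hw.2 (Nat.le_succ n) (hew n))
    have hy1 : Tendsto (fun n => f (s (n + 1))) atTop (𝓝 y) := by
      have : (fun n => f (s (n + 1))) = fun n => y - e (n + 1) := funext fun n => hfs (n + 1)
      rw [this]
      simpa using tendsto_const_nhds.sub het
    have hy2 : Tendsto (fun n => f (s (n + 1))) atTop (𝓝 (f xl)) :=
      (f.continuous.tendsto xl).comp (hxl.comp (tendsto_add_atTop_nat 1))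
    exact ⟨xl, hxlW, (tendsto_nhds_unique hy1 hy2).symm⟩
  exact mem_of_superset (hyp (u 1) (humem 1)) hincl

end OpenMapping

end Stmt18Aux2

namespace Stmt18Aux3

theorem neg_mem_closure' {H : Type*} [AddCommGroup H] [TopologicalSpace H]
    [IsTopologicalAddGroup H] {s : Set H} (hs : ∀ z ∈ s, -z ∈ s) {z : H}
    (hz : z ∈ closure s) : -z ∈ closure s := by
  have h1 : (fun p : H => -p) '' s ⊆ s := by rintro p ⟨q, hq, rfl⟩; exact hs q hq
  have h2 : (fun p : H => -p) '' closure s ⊆ closure ((fun p : H => -p) '' s) :=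
    image_closure_subset_closure_image continuous_neg
  exact closure_mono h1 (h2 ⟨z, hz, rfl⟩)

theorem exists_conv_symm {G : Type*} [AddCommGroup G] [Module ℝ G] [TopologicalSpace G]
    [IsTopologicalAddGroup G] [LocallyConvexSpace ℝ G] {W : Set G} (hW : W ∈ 𝓝 (0 : G)) :
    ∃ U ∈ 𝓝 (0 : G), U ⊆ W ∧ Convex ℝ U ∧ ∀ x ∈ U, -x ∈ U := by
  obtain ⟨U', hU', hU'W⟩ := (LocallyConvexSpace.convex_basis_zero ℝ G).mem_iff.mp hW
  refine ⟨U' ∩ -U', inter_mem hU'.1 (neg_mem_nhds_zero _ hU'.1),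
    fun x hx => hU'W hx.1, hU'.2.inter hU'.2.neg, ?_⟩
  rintro x ⟨h1, h2⟩
  exact ⟨by simpa using h2, by simpa using h1⟩

section Baire
variable {G H : Type*}
  [AddCommGroup G] [Module ℝ G] [TopologicalSpace G] [IsTopologicalAddGroup G]
  [ContinuousSMul ℝ G] [LocallyConvexSpace ℝ G]
  [AddCommGroup H] [Module ℝ H] [UniformSpace H] [IsUniformAddGroup H]
  [ContinuousSMul ℝ H] [(uniformity H).IsCountablyGenerated] [CompleteSpace H]

theorem closure_image_mem_nhds_of_surjective (f : G →L[ℝ] H)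
    (hsurj : Function.Surjective f) {W : Set G} (hW : W ∈ 𝓝 (0 : G)) :
    closure (f '' W) ∈ 𝓝 (0 : H) := by
  obtain ⟨U, hU, hUW, hUconv, hUsym⟩ := exists_conv_symm hW
  set K := closure (f '' U) with hKdef
  have hKconv : Convex ℝ K := (hUconv.linear_image f.toLinearMap).closure
  have hKsymm : ∀ z ∈ K, -z ∈ K := by
    intro z hz
    refine neg_mem_closure' ?_ hz
    rintro p ⟨q, hq, rfl⟩
    exact ⟨-q, hUsym q hq, by rw [map_neg]⟩
  have hcover : ∀ y : H, ∃ n : ℕ, y ∈ ((n : ℝ) + 1) • K := by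
    intro y
    obtain ⟨x, rfl⟩ := hsurj y
    obtain ⟨r, hr⟩ := absorbs_iff_norm.1 ((absorbent_nhds_zero (𝕜 := ℝ) hU) x)
    obtain ⟨n, hn⟩ := exists_nat_ge r
    have hx : x ∈ ((n : ℝ) + 1) • U := singleton_subset_iff.mp
      (hr _ (by rw [Real.norm_eq_abs, abs_of_pos (by positivity)]; linarith))
    obtain ⟨u, hu', rfl⟩ := hx
    refine ⟨n, ?_⟩
    rw [map_smul]
    exact smul_mem_smul_set (subset_closure ⟨u, hu', rfl⟩)
  have hbaire : ∃ n : ℕ, (interior (((n : ℝ) + 1) • K)).Nonempty := by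
    apply nonempty_interior_of_iUnion_of_closed
      (f := fun n : ℕ => ((n : ℝ) + 1) • K)
    · exact fun n => isClosed_closure.smul_of_ne_zero (by positivity)
    · exact eq_univ_of_forall fun y => mem_iUnion.2 (hcover y)
  obtain ⟨n, z, hz⟩ := hbaire
  set c : ℝ := (n : ℝ) + 1 with hcdef
  have hc : c ≠ 0 := by positivity
  have hz' : c⁻¹ • z ∈ interior K := by
    rw [interior_smul₀ hc] at hz
    exact ((mem_smul_set_iff_inv_smul_mem₀ hc _ _).mp hz)
  have hz'' : -(c⁻¹ • z) ∈ interior K := by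
    have hopen : IsOpen (-(interior K)) := isOpen_interior.neg
    have hsub : -(interior K) ⊆ K := by
      intro p hp
      have : -p ∈ interior K := Set.mem_neg.mp hp
      simpa using hKsymm _ (interior_subset this)
    refine interior_maximal hsub hopen ?_
    rw [Set.mem_neg, neg_neg]
    exact hz'
  have h0 : (0 : H) ∈ interior K := by
    have := hKconv.interior hz' hz''
      (by norm_num : (0:ℝ) ≤ 1/2) (by norm_num : (0:ℝ) ≤ 1/2) (by norm_num)
    rwa [smul_neg, add_neg_cancel] at this
  have hKnhds : K ∈ 𝓝 (0 : H) := mem_nhds_iff.2 ⟨interior K, interior_subset, isOpen_interior, h0⟩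
  exact mem_of_superset hKnhds (closure_mono (image_mono (f := f) hUW))

end Baire

end Stmt18Aux3


set_option maxHeartbeats 2000000 in
open Filter Topology Set Pointwise in
/-- duality criterion for surjectivity between Fréchet spaces.
A Fréchet space is a complete metrizable locally convex topological vector space. -/
theorem stmt_18
    (E F : Type*)
    [AddCommGroup E] [Module ℝ E] [UniformSpace E] [IsUniformAddGroup E]
    [ContinuousSMul ℝ E] [LocallyConvexSpace ℝ E]
    [CompleteSpace E] [(uniformity E).IsCountablyGenerated] [T0Space E]
    [AddCommGroup F] [Module ℝ F] [UniformSpace F] [IsUniformAddGroup F]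
    [ContinuousSMul ℝ F] [LocallyConvexSpace ℝ F]
    [CompleteSpace F] [(uniformity F).IsCountablyGenerated] [T0Space F]
    (Φ : E →L[ℝ] F)
    (adj : WeakDual ℝ F → WeakDual ℝ E)
    (hadj : ∀ (T : WeakDual ℝ F) (x : E), adj T x = T (Φ x)) :
    Function.Surjective Φ ↔
      (Function.Injective adj ∧ IsClosed (Set.range adj)) := by
  classical
  constructor
  · -- forward direction
    intro hsurj
    constructor
    · intro T T' h
      apply DFunLike.ext
      intro y
      obtain ⟨x, rfl⟩ := hsurj y
      have h1 : adj T x = adj T' x := by rw [h]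
      rwa [hadj, hadj] at h1
    · -- closed range
      have himg : ∀ W ∈ 𝓝 (0:E), Φ '' W ∈ 𝓝 (0:F) :=
        Stmt18Aux2.image_mem_nhds Φ
          (fun W hW => Stmt18Aux3.closure_image_mem_nhds_of_surjective Φ hsurj hW)
      have hrange : Set.range adj = {S : WeakDual ℝ E | ∀ x : E, Φ x = 0 → S x = 0} := by
        apply Set.Subset.antisymm
        · rintro S ⟨T, rfl⟩ x hx
          rw [hadj, hx, map_zero]
        · intro S hS
          set σ : F → E := Function.surjInv hsurj with hσ
          have hσΦ : ∀ y, Φ (σ y) = y := Function.rightInverse_surjInv hsurj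
          have hdiff : ∀ x x' : E, Φ x = Φ x' → S x = S x' := by
            intro x x' hxx
            have h1 : S (x - x') = 0 := hS _ (by rw [map_sub, hxx, sub_self])
            have h2 : S (x - x') = S x - S x' := map_sub S x x'
            linarith [h1, h2]
          let g : F →ₗ[ℝ] ℝ :=
            { toFun := fun y => S (σ y)
              map_add' := fun y z => by
                have h1 : Φ (σ (y + z)) = Φ (σ y + σ z) := by
                  rw [map_add, hσΦ, hσΦ, hσΦ]
                show S (σ (y + z)) = S (σ y) + S (σ z)
                rw [hdiff _ _ h1, map_add]
              map_smul' := fun r y => by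
                have h1 : Φ (σ (r • y)) = Φ (r • σ y) := by rw [map_smul, hσΦ, hσΦ]
                show S (σ (r • y)) = r • S (σ y)
                rw [hdiff _ _ h1, map_smul] }
          have hU₀ : (⇑S) ⁻¹' (Metric.closedBall (0:ℝ) 1) ∈ 𝓝 (0:E) := by
            refine (map_continuous S).continuousAt.preimage_mem_nhds ?_
            rw [map_zero]
            exact Metric.closedBall_mem_nhds _ one_pos
          have hgb : ∀ y ∈ Φ '' ((⇑S) ⁻¹' Metric.closedBall (0:ℝ) 1), |g y| ≤ 1 := by
            rintro y ⟨x, hx, rfl⟩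
            have h2 : g (Φ x) = S x := hdiff _ _ (hσΦ (Φ x))
            rw [h2]
            have h4 := Metric.mem_closedBall.mp hx
            rwa [Real.dist_eq, sub_zero] at h4
          have hgcont : Continuous g := Stmt18Aux.continuous_of_bounded g (himg _ hU₀) hgb
          refine ⟨(⟨g, hgcont⟩ : F →L[ℝ] ℝ), ?_⟩
          apply DFunLike.ext
          intro x
          refine (hadj _ x).trans ?_
          exact hdiff _ _ (hσΦ (Φ x))
      rw [hrange]
      have heq : {S : WeakDual ℝ E | ∀ x : E, Φ x = 0 → S x = 0} =
          ⋂ x : E, {S : WeakDual ℝ E | Φ x = 0 → S x = 0} := by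
        ext S; simp
      rw [heq]
      refine isClosed_iInter fun x => ?_
      by_cases hx : Φ x = 0
      · have heq2 : {S : WeakDual ℝ E | Φ x = 0 → S x = 0} =
            {S : WeakDual ℝ E | S x = 0} := by
          ext S; simp [hx]
        rw [heq2]
        exact isClosed_eq (WeakDual.eval_continuous x) continuous_const
      · have heq2 : {S : WeakDual ℝ E | Φ x = 0 → S x = 0} = Set.univ := by
          ext S; simp [hx]
        rw [heq2]
        exact isClosed_univ
  · -- reverse direction
    rintro ⟨hinj, hclosed⟩
    have hadd : ∀ T T' : WeakDual ℝ F, adj (T + T') = adj T + adj T' := by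
      intro T T'
      apply DFunLike.ext; intro x
      have h1 : (adj T + adj T') x = adj T x + adj T' x := rfl
      rw [h1, hadj, hadj, hadj]
      rfl
    have hsmul : ∀ (c : ℝ) (T : WeakDual ℝ F), adj (c • T) = c • adj T := by
      intro c T
      apply DFunLike.ext; intro x
      have h1 : (c • adj T) x = c * adj T x := rfl
      rw [h1, hadj, hadj]
      rfl
    have hzero : adj 0 = 0 := by
      apply DFunLike.ext; intro x
      rw [hadj]; rfl
    have hcont : Continuous adj := by
      apply WeakDual.continuous_of_continuous_eval
      intro x
      have h1 : (fun T : WeakDual ℝ F => adj T x) = fun T : WeakDual ℝ F => T (Φ x) :=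
        funext fun T => hadj T x
      rw [h1]
      exact WeakDual.eval_continuous (Φ x)
    have hclosureW : ∀ W ∈ 𝓝 (0:E), closure (Φ '' W) ∈ 𝓝 (0:F) := by
      intro W' hW'
      obtain ⟨U, hU, hUW, hUconv, hUsym⟩ := Stmt18Aux3.exists_conv_symm hW'
      set B : Set (WeakDual ℝ F) := adj ⁻¹' (Stmt18Aux.pol 1 U) with hB
      set C : Set (WeakDual ℝ E) := Stmt18Aux.pol 1 U ∩ Set.range adj with hC
      have hCcomp : IsCompact C := (Stmt18Aux.isCompact_pol hU 1).inter_right hclosed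
      have hCconv : Convex ℝ C := by
        rintro S1 ⟨hS1P, hS1R⟩ S2 ⟨hS2P, hS2R⟩ a b ha hb hab
        constructor
        · intro x hx
          have h1 : (a • S1 + b • S2) x = a * S1 x + b * S2 x := rfl
          rw [h1]
          have e1 : |S1 x| ≤ 1 := hS1P x hx
          have e2 : |S2 x| ≤ 1 := hS2P x hx
          calc |a * S1 x + b * S2 x| ≤ |a * S1 x| + |b * S2 x| := abs_add_le _ _
            _ = a * |S1 x| + b * |S2 x| := by
                rw [abs_mul, abs_mul, abs_of_nonneg ha, abs_of_nonneg hb]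
            _ ≤ a * 1 + b * 1 := by
                have e3 := mul_le_mul_of_nonneg_left e1 ha
                have e4 := mul_le_mul_of_nonneg_left e2 hb
                linarith
            _ = 1 := by linarith
        · obtain ⟨T1, hT1⟩ := hS1R
          obtain ⟨T2, hT2⟩ := hS2R
          exact ⟨a • T1 + b • T2, by rw [hadd, hsmul, hsmul, hT1, hT2]⟩
      have hC0 : (0 : WeakDual ℝ E) ∈ C := by
        constructor
        · intro x hx
          have h1 : (0 : WeakDual ℝ E) x = 0 := rfl
          rw [h1]; norm_num
        · exact ⟨0, hzero⟩
      haveI : FirstCountableTopology F := UniformSpace.firstCountableTopology F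
      obtain ⟨vb, hvb⟩ := (𝓝 (0:F)).exists_antitone_basis
      set D : ℕ × ℕ → Set (WeakDual ℝ E) :=
        fun p => adj '' (B ∩ Stmt18Aux.pol ((p.2 : ℝ) + 1) (vb p.1)) with hD
      have hBclosed : IsClosed B := (Stmt18Aux.isClosed_pol 1 U).preimage hcont
      have hDcomp : ∀ p, IsCompact (D p) := by
        intro p
        have h2 : IsCompact (Stmt18Aux.pol ((p.2 : ℝ) + 1) (vb p.1)) :=
          Stmt18Aux.isCompact_pol (hvb.1.mem_of_mem trivial) _
        exact (h2.of_isClosed_subset (hBclosed.inter (Stmt18Aux.isClosed_pol _ _))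
          Set.inter_subset_right).image hcont
      have hDcover : ∀ S ∈ C, ∃ p : ℕ × ℕ, S ∈ D p := by
        rintro S ⟨hSP, T, rfl⟩
        have hTB : T ∈ B := by rw [hB]; exact hSP
        have hball : (⇑T) ⁻¹' (Metric.closedBall (0:ℝ) 1) ∈ 𝓝 (0:F) := by
          refine (map_continuous T).continuousAt.preimage_mem_nhds ?_
          rw [map_zero]; exact Metric.closedBall_mem_nhds _ one_pos
        obtain ⟨m, -, hm⟩ := hvb.1.mem_iff.mp hball
        refine ⟨(m, 0), T, ⟨hTB, ?_⟩, rfl⟩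
        intro y hy
        have h3 := Metric.mem_closedBall.mp (hm hy)
        rw [Real.dist_eq, sub_zero] at h3
        norm_num
        linarith
      haveI hCne : Nonempty ↥C := ⟨⟨0, hC0⟩⟩
      haveI : CompactSpace ↥C := isCompact_iff_compactSpace.mp hCcomp
      have hmain : ∃ p : ℕ × ℕ,
          (interior ((Subtype.val : ↥C → WeakDual ℝ E) ⁻¹' D p)).Nonempty := by
        apply nonempty_interior_of_iUnion_of_closed
        · exact fun p => ((hDcomp p).isClosed).preimage continuous_subtype_val
        · apply eq_univ_of_forall
          rintro ⟨S, hS⟩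
          obtain ⟨p, hp⟩ := hDcover S hS
          exact mem_iUnion.2 ⟨p, hp⟩
      obtain ⟨⟨m, k⟩, SC, hSint⟩ := hmain
      obtain ⟨tset, htsub, htopen, hSt⟩ := mem_interior.mp hSint
      obtain ⟨O, hOopen, hOeq⟩ := isOpen_induced_iff.mp htopen
      set S₀ : WeakDual ℝ E := (SC : WeakDual ℝ E) with hS₀def
      have hS₀C : S₀ ∈ C := SC.2
      have hS₀O : S₀ ∈ O := by
        have h1 : SC ∈ Subtype.val ⁻¹' O := by rw [hOeq]; exact hSt
        exact h1
      have hCO : ∀ S, S ∈ C → S ∈ O → S ∈ D (m, k) := by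
        intro S hSC hSO
        have h1 : (⟨S, hSC⟩ : ↥C) ∈ Subtype.val ⁻¹' O := hSO
        rw [hOeq] at h1
        exact htsub h1
      set hfun : ℝ × WeakDual ℝ E → WeakDual ℝ E := fun q => S₀ + q.1 • (q.2 - S₀) with hhf
      have hfc : Continuous hfun :=
        continuous_const.add (continuous_fst.smul (continuous_snd.sub continuous_const))
      have hsub0 : ({(0:ℝ)} : Set ℝ) ×ˢ C ⊆ hfun ⁻¹' O := by
        rintro ⟨t0, S⟩ ⟨ht0, hS⟩
        have ht0' : t0 = 0 := ht0
        have h1 : hfun (t0, S) = S₀ := by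
          simp only [hhf]
          rw [ht0', zero_smul, add_zero]
        rw [Set.mem_preimage, h1]
        exact hS₀O
      obtain ⟨u1, v1, hu1, hv1, h0u1, hCv1, huv⟩ :=
        generalized_tube_lemma isCompact_singleton hCcomp (hfc.isOpen_preimage _ hOopen) hsub0
      obtain ⟨ε, hε, hballu⟩ := Metric.isOpen_iff.mp hu1 0 (h0u1 rfl)
      set t : ℝ := min (ε/2) 1 with htdef
      have ht0 : 0 < t := lt_min (by positivity) one_pos
      have ht1 : t ≤ 1 := min_le_right _ _
      have htu1 : t ∈ u1 := by
        apply hballu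
        rw [Metric.mem_ball, Real.dist_eq, sub_zero, abs_of_pos ht0]
        calc t ≤ ε/2 := min_le_left _ _
          _ < ε := by linarith
      have hkey : ∀ S ∈ C, S₀ + t • (S - S₀) ∈ D (m, k) := by
        intro S hS
        have h2 : hfun (t, S) ∈ O := huv ⟨htu1, hCv1 hS⟩
        have h3 : S₀ + t • (S - S₀) ∈ C := by
          have heq2 : S₀ + t • (S - S₀) = (1 - t) • S₀ + t • S := by module
          rw [heq2]
          exact hCconv hS₀C hS (by linarith) (le_of_lt ht0) (by ring)
        exact hCO _ h3 h2
      obtain ⟨T₀, ⟨hT₀B, hT₀pol⟩, hT₀⟩ := hCO _ hS₀C hS₀O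
      set cc : ℝ := (2 * ((k:ℝ) + 1)) / t + ((k:ℝ) + 1) with hccdef
      have hccpos : 0 < cc := by positivity
      have hBbound : ∀ T ∈ B, ∀ y ∈ vb m, |T y| ≤ cc := by
        intro T hTB y hy
        have hSC2 : adj T ∈ C := ⟨hTB, ⟨T, rfl⟩⟩
        obtain ⟨T', ⟨hT'B, hT'pol⟩, hT'⟩ := hkey (adj T) hSC2
        have hlin : adj ((1 - t) • T₀ + t • T) = S₀ + t • (adj T - S₀) := by
          rw [hadd, hsmul, hsmul, hT₀]
          module
        have hTeq : T' = (1 - t) • T₀ + t • T := hinj (by rw [hT', hlin])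
        have heval : T' y = (1 - t) * T₀ y + t * T y := by rw [hTeq]; rfl
        have h1 : |T₀ y| ≤ (k:ℝ) + 1 := hT₀pol y hy
        have h2 : |T' y| ≤ (k:ℝ) + 1 := hT'pol y hy
        have h3 : t * T y = T' y - (1 - t) * T₀ y := by rw [heval]; ring
        have h4 : |t * T y| ≤ 2 * ((k:ℝ) + 1) := by
          rw [h3]
          calc |T' y - (1 - t) * T₀ y| ≤ |T' y| + |(1 - t) * T₀ y| := abs_sub _ _
            _ ≤ ((k:ℝ)+1) + |1 - t| * |T₀ y| := by rw [abs_mul]; linarith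
            _ ≤ ((k:ℝ)+1) + 1 * ((k:ℝ)+1) := by
                have hb1 : |1 - t| ≤ 1 := by rw [abs_of_nonneg (by linarith)]; linarith
                have hb2 := mul_le_mul hb1 h1 (abs_nonneg _) zero_le_one
                linarith
            _ = 2 * ((k:ℝ)+1) := by ring
        have h6 : |t| * |T y| ≤ 2*((k:ℝ)+1) := by rwa [← abs_mul]
        rw [abs_of_pos ht0] at h6
        have h7 : |T y| ≤ 2*((k:ℝ)+1)/t := by
          rw [le_div_iff₀ ht0]
          nlinarith [h6]
        have h8 : 2*((k:ℝ)+1)/t ≤ cc := by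
          rw [hccdef]
          exact le_add_of_nonneg_right (by positivity)
        exact h7.trans h8
      have hdense : ∀ y ∈ vb m, y ∈ closure (Φ '' (cc • U)) := by
        intro y hy
        by_contra hyK
        have hKconv : Convex ℝ (closure (Φ '' (cc • U))) :=
          ((hUconv.smul cc).linear_image Φ.toLinearMap).closure
        obtain ⟨ff, s0, hff1, hff2⟩ :=
          geometric_hahn_banach_closed_point hKconv isClosed_closure hyK
        have h0K : (0 : F) ∈ closure (Φ '' (cc • U)) := by
          refine subset_closure ⟨0, ?_, map_zero Φ⟩
          have h0U : (0:E) ∈ U := mem_of_mem_nhds hU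
          have h1 : cc • (0:E) ∈ cc • U := smul_mem_smul_set h0U
          rwa [smul_zero] at h1
        have hs0 : 0 < s0 := by
          have h1 := hff1 0 h0K
          rwa [map_zero] at h1
        have hKsym : ∀ z ∈ closure (Φ '' (cc • U)), -z ∈ closure (Φ '' (cc • U)) := by
          intro z hz
          refine Stmt18Aux3.neg_mem_closure' ?_ hz
          rintro p ⟨q, hq, rfl⟩
          refine ⟨-q, ?_, by rw [map_neg]⟩
          obtain ⟨w0, hw0, rfl⟩ := hq
          rw [← smul_neg]
          exact smul_mem_smul_set (hUsym _ hw0)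
        have habs2 : ∀ x ∈ U, |ff (Φ (cc • x))| ≤ s0 := by
          intro x hx
          have h1 : Φ (cc • x) ∈ closure (Φ '' (cc • U)) :=
            subset_closure ⟨cc • x, smul_mem_smul_set hx, rfl⟩
          have h2 := hff1 _ h1
          have h3 := hff1 _ (hKsym _ h1)
          rw [map_neg] at h3
          exact abs_le.2 ⟨by linarith, le_of_lt h2⟩
        set T1 : WeakDual ℝ F := (cc / s0) • ff with hT1def
        have hT1B : T1 ∈ B := by
          have hmem : ∀ x ∈ U, |adj T1 x| ≤ 1 := by
            intro x hx
            rw [hadj]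
            have h1 : T1 (Φ x) = (cc / s0) * ff (Φ x) := rfl
            have h2 : ff (Φ (cc • x)) = cc * ff (Φ x) := by
              rw [map_smul, map_smul]
              rfl
            have h3 := habs2 x hx
            rw [h2, abs_mul, abs_of_pos hccpos] at h3
            rw [h1, abs_mul, abs_of_pos (div_pos hccpos hs0)]
            rw [div_mul_eq_mul_div, div_le_one hs0]
            linarith
          exact hmem
        have hcon := hBbound T1 hT1B y hy
        have hval : T1 y = (cc / s0) * ff y := rfl
        rw [hval] at hcon
        have h5 : (cc / s0) * ff y > cc := by
          have hq := div_pos hccpos hs0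
          calc (cc/s0) * ff y > (cc/s0) * s0 := by
                exact mul_lt_mul_of_pos_left hff2 hq
            _ = cc := by field_simp
        have h6 : (cc/s0) * ff y ≤ |(cc/s0) * ff y| := le_abs_self _
        linarith
      have hfinal : ∀ y ∈ vb m, cc⁻¹ • y ∈ closure (Φ '' W') := by
        intro y hy
        have h1 : cc⁻¹ • y ∈ (fun p : F => cc⁻¹ • p) '' closure (Φ '' (cc • U)) :=
          ⟨y, hdense y hy, rfl⟩
        have h2 : (fun p : F => cc⁻¹ • p) '' closure (Φ '' (cc • U)) ⊆
            closure ((fun p : F => cc⁻¹ • p) '' (Φ '' (cc • U))) :=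
          image_closure_subset_closure_image (continuous_const_smul _)
        have h3 : (fun p : F => cc⁻¹ • p) '' (Φ '' (cc • U)) ⊆ Φ '' W' := by
          rintro p ⟨q, ⟨x, ⟨x0, hx0, rfl⟩, rfl⟩, rfl⟩
          refine ⟨x0, hUW hx0, ?_⟩
          show Φ x0 = cc⁻¹ • Φ (cc • x0)
          rw [← map_smul, smul_smul, inv_mul_cancel₀ hccpos.ne', one_smul]
        exact closure_mono h3 (h2 h1)
      have hnb : cc⁻¹ • vb m ∈ 𝓝 (0:F) :=
        (set_smul_mem_nhds_zero_iff (inv_ne_zero hccpos.ne')).2 (hvb.1.mem_of_mem trivial)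
      refine mem_of_superset hnb ?_
      rintro z ⟨y, hy, rfl⟩
      exact hfinal y hy
    have himg := Stmt18Aux2.image_mem_nhds Φ hclosureW
    intro y
    have hrangeΦ : Set.range Φ ∈ 𝓝 (0:F) := by
      have h1 := himg Set.univ Filter.univ_mem
      rwa [Set.image_univ] at h1
    obtain ⟨r, hr⟩ := absorbs_iff_norm.1 ((absorbent_nhds_zero (𝕜 := ℝ) hrangeΦ) y)
    set a : ℝ := max r 1 with hadef
    have hapos : (0:ℝ) < a := lt_of_lt_of_le one_pos (le_max_right r 1)
    have hya : y ∈ a • Set.range Φ := singleton_subset_iff.mp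
      (hr a (by rw [Real.norm_eq_abs, abs_of_pos hapos]; exact le_max_left _ _))
    obtain ⟨z, ⟨x, rfl⟩, rfl⟩ := hya
    exact ⟨a • x, map_smul Φ a x⟩
end
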